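/- arXiv:2401.00380 — 7 statements merged into one kernel-verified Lean document; each statement's English description precedes it below -/
import Mathlib

section
/- Suppose that v ↦ T(v,ξ) is continuously differentiable for each ξ ∈ Ξ, that L > 0 satisfies both ‖T(v,ξ) − T(v,ξ')‖ ≤ L‖ξ − ξ'‖ and ‖∇_v T(v,ξ) − ∇_v T(v,ξ')‖ ≤ L‖ξ − ξ'‖ for all v ∈ V and ξ, ξ' ∈ Ξ, and that C₀' := sup_{f∈𝔽, ξ∈Ξ} ‖Δᵀ ∇_v T(Δf,ξ) Δ‖ is finite. Then for every t > 0, every f ∈ 𝔽, every ξ, ξ' ∈ Ξ and every row index r ∈ {1,…,N}, the r‑th row of the Jacobian ∇_f û(f,·,t) satisfies ‖[∇_f û(f,ξ,t)]_r − [∇_f û(f,ξ',t)]_r‖ ≤ L ‖Δᵀ‖ ( θ1‖Δ‖ + θ2‖Δ‖ + θ2 C₀'/(2t) ) ‖ξ − ξ'‖, where [M]_r denotes the r‑th row of the matrix M regarded as a vector in ℝ^N. -/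
/-!
For `t > 0` the penalty `h(·, t)` is `C¹` with derivative `h'(z) = clamp((z + t) / (2t), 0, 1)`,
so `h'` takes values in `[0, 1]` and is `1/(2t)`-Lipschitz. By the chain rule the `r`-th row of
`∇_f û(f, ξ, t)` is `(θ1 + θ2 h'(C_r − τ_r)) · e_rᵀ Δᵀ ∇_v T(Δf, ξ) Δ`. Splitting the difference of
two such rows as `(θ1 + θ2 a)(P − P') + θ2 (a − a') P'`, the first term is controlled by the
Lipschitz bound on `∇_v T` and the second by the Lipschitz bound on `T` (through `h'`) and `C₀'`.
-/

open MeasureTheory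

/-- The smoothed lateness penalty `h(z,t)`: `0` for `z < -t`, `(z+t)^2/(4t)` for
`-t ≤ z ≤ t`, and `z` for `z > t`. -/
noncomputable def hpen (t z : ℝ) : ℝ :=
  if z < -t then 0 else if z ≤ t then (z + t) ^ 2 / (4 * t) else z

variable {A N k : ℕ}

/-- The path travel time `C(f,ξ) = Δᵀ T(Δf, ξ)`, where the arc–path incidence matrix
`Δ` is encoded as a continuous linear map and `Δᵀ` as its (Euclidean) adjoint. -/
noncomputable def pathTime (Δ : EuclideanSpace ℝ (Fin N) →L[ℝ] EuclideanSpace ℝ (Fin A))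
    (T : EuclideanSpace ℝ (Fin A) → EuclideanSpace ℝ (Fin k) → EuclideanSpace ℝ (Fin A))
    (f : EuclideanSpace ℝ (Fin N)) (ξ : EuclideanSpace ℝ (Fin k)) :
    EuclideanSpace ℝ (Fin N) :=
  ContinuousLinearMap.adjoint Δ (T (Δ f) ξ)

/-- The smoothed disutility `û(f,ξ,t)` with components
`û_r = θ0 d_r + θ1 C_r(f,ξ) + θ2 h(C_r(f,ξ) − τ_r, t)`. -/
noncomputable def uhat (Δ : EuclideanSpace ℝ (Fin N) →L[ℝ] EuclideanSpace ℝ (Fin A))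
    (θ0 θ1 θ2 : ℝ) (d τ : EuclideanSpace ℝ (Fin N))
    (T : EuclideanSpace ℝ (Fin A) → EuclideanSpace ℝ (Fin k) → EuclideanSpace ℝ (Fin A))
    (f : EuclideanSpace ℝ (Fin N)) (ξ : EuclideanSpace ℝ (Fin k)) (t : ℝ) :
    EuclideanSpace ℝ (Fin N) :=
  WithLp.toLp 2 (fun r => θ0 * d r + θ1 * pathTime Δ T f ξ r + θ2 * hpen t (pathTime Δ T f ξ r - τ r))

open Set ContinuousLinearMap

section SmoothedPenalty

lemma hasDerivAt_max_zero_sq (z : ℝ) :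
    HasDerivAt (fun x : ℝ => max 0 x ^ 2) (2 * max 0 z) z := by
  rcases lt_trichotomy z 0 with hz | rfl | hz
  · rw [max_eq_left hz.le, mul_zero]
    refine (hasDerivAt_const z 0).congr_of_eventuallyEq ?_
    filter_upwards [Iio_mem_nhds hz] with x hx
    simp [max_eq_left ((mem_Iio.mp hx).le)]
  · have hneg : HasDerivWithinAt (fun x : ℝ => max 0 x ^ 2) 0 (Iic 0) 0 :=
      (hasDerivWithinAt_const 0 _ 0).congr
        (fun x hx => by simp [max_eq_left (mem_Iic.mp hx)]) (by simp)
    have hpos : HasDerivWithinAt (fun x : ℝ => max 0 x ^ 2) 0 (Ici 0) 0 := by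
      simpa using (hasDerivAt_pow 2 (0 : ℝ)).hasDerivWithinAt.congr
        (fun x hx => by simp [max_eq_right (mem_Ici.mp hx)]) (by simp)
    simpa [Iic_union_Ici] using hneg.union hpos
  · rw [max_eq_right hz.le]
    refine ((hasDerivAt_pow 2 z).congr_of_eventuallyEq ?_).congr_deriv (by ring)
    filter_upwards [Ioi_mem_nhds hz] with x hx
    simp [max_eq_right ((mem_Ioi.mp hx).le)]

variable {t : ℝ}

lemma hpen_eq_sub_max_zero_sq (ht : 0 < t) (z : ℝ) :
    hpen t z = (max 0 (z + t) ^ 2 - max 0 (z - t) ^ 2) / (4 * t) := by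
  unfold hpen
  split_ifs
  · rw [max_eq_left (by linarith), max_eq_left (by linarith)]
    simp
  · rw [max_eq_right (by linarith), max_eq_left (by linarith)]
    ring
  · rw [max_eq_right (by linarith), max_eq_right (by linarith)]
    field_simp
    ring

noncomputable def hpenDeriv (t z : ℝ) : ℝ :=
  projIcc 0 1 zero_le_one ((z + t) / (2 * t))

lemma hpenDeriv_mem_Icc (t z : ℝ) : hpenDeriv t z ∈ Icc (0 : ℝ) 1 :=
  Subtype.prop _

lemma abs_hpenDeriv_sub_le (ht : 0 < t) (z w : ℝ) :
    |hpenDeriv t z - hpenDeriv t w| ≤ |z - w| / (2 * t) := by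
  refine (abs_projIcc_sub_projIcc zero_le_one).trans_eq ?_
  rw [← sub_div, abs_div, abs_of_pos (by positivity : 0 < 2 * t), add_sub_add_right_eq_sub]

lemma hasDerivAt_hpen (ht : 0 < t) (z : ℝ) : HasDerivAt (hpen t) (hpenDeriv t z) z := by
  have hsq := (((hasDerivAt_max_zero_sq (z + t)).comp z ((hasDerivAt_id z).add_const t)).sub
    ((hasDerivAt_max_zero_sq (z - t)).comp z ((hasDerivAt_id z).sub_const t))).div_const (4 * t)
  refine (hsq.congr_of_eventuallyEq
    (Filter.Eventually.of_forall (hpen_eq_sub_max_zero_sq ht))).congr_deriv ?_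
  simp only [mul_one, hpenDeriv, coe_projIcc]
  rcases lt_or_ge z (-t) with h₁ | h₁
  · rw [max_eq_left (by linarith : z + t ≤ 0), max_eq_left (by linarith : z - t ≤ 0),
      min_eq_right (by rw [div_le_one (by positivity)]; linarith),
      max_eq_left (div_nonpos_of_nonpos_of_nonneg (by linarith) (by positivity))]
    ring
  rcases le_or_gt z t with h₂ | h₂
  · rw [max_eq_right (by linarith : 0 ≤ z + t), max_eq_left (by linarith : z - t ≤ 0),
      min_eq_right (by rw [div_le_one (by positivity)]; linarith),
      max_eq_right (div_nonneg (by linarith) (by positivity))]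
    field_simp
    ring
  · rw [max_eq_right (by linarith : 0 ≤ z + t), max_eq_right (by linarith : 0 ≤ z - t),
      min_eq_left (by rw [le_div_iff₀ (by positivity)]; linarith), max_eq_right zero_le_one]
    field_simp
    ring

end SmoothedPenalty

lemma norm_smul_sub_smul_le {F : Type*} [SeminormedAddCommGroup F] [NormedSpace ℝ F]
    {θ1 θ2 a a' : ℝ} (hθ1 : 0 ≤ θ1) (hθ2 : 0 ≤ θ2) (ha : a ∈ Icc (0 : ℝ) 1) (P P' : F) :
    ‖(θ1 + θ2 * a) • P - (θ1 + θ2 * a') • P'‖ ≤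
      (θ1 + θ2) * ‖P - P'‖ + θ2 * |a - a'| * ‖P'‖ := by
  have hsplit : (θ1 + θ2 * a) • P - (θ1 + θ2 * a') • P' =
      (θ1 + θ2 * a) • (P - P') + (θ2 * (a - a')) • P' := by
    module
  have hcoef : |θ1 + θ2 * a| ≤ θ1 + θ2 := by
    rw [abs_of_nonneg (by nlinarith [ha.1])]
    nlinarith [ha.2]
  rw [hsplit]
  calc _ ≤ ‖(θ1 + θ2 * a) • (P - P')‖ + ‖(θ2 * (a - a')) • P'‖ := norm_add_le _ _
    _ = |θ1 + θ2 * a| * ‖P - P'‖ + θ2 * |a - a'| * ‖P'‖ := by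
      simp only [norm_smul, norm_mul, Real.norm_eq_abs, abs_of_nonneg hθ2]
    _ ≤ _ := by gcongr

lemma norm_proj_comp_le {E ι : Type*} [SeminormedAddCommGroup E] [NormedSpace ℝ E] [Fintype ι]
    (r : ι) (g : E →L[ℝ] EuclideanSpace ℝ ι) : ‖(EuclideanSpace.proj r).comp g‖ ≤ ‖g‖ :=
  opNorm_le_bound _ (norm_nonneg _) fun x => (PiLp.norm_apply_le (g x) r).trans (g.le_opNorm x)

section Disutility

variable {Δ : EuclideanSpace ℝ (Fin N) →L[ℝ] EuclideanSpace ℝ (Fin A)}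
  {T : EuclideanSpace ℝ (Fin A) → EuclideanSpace ℝ (Fin k) → EuclideanSpace ℝ (Fin A)}
  {f : EuclideanSpace ℝ (Fin N)} {ξ ξ' : EuclideanSpace ℝ (Fin k)} {t θ1 θ2 : ℝ}

lemma hasFDerivAt_pathTime (hT : DifferentiableAt ℝ (fun v => T v ξ) (Δ f)) :
    HasFDerivAt (fun g => pathTime Δ T g ξ)
      ((adjoint Δ).comp ((fderiv ℝ (fun v => T v ξ) (Δ f)).comp Δ)) f :=
  (adjoint Δ).hasFDerivAt.comp f (hT.hasFDerivAt.comp f Δ.hasFDerivAt)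

lemma hasFDerivAt_uhat_apply (ht : 0 < t) (hT : DifferentiableAt ℝ (fun v => T v ξ) (Δ f))
    (θ0 θ1 θ2 : ℝ) (d τ : EuclideanSpace ℝ (Fin N)) (r : Fin N) :
    HasFDerivAt (fun g => uhat Δ θ0 θ1 θ2 d τ T g ξ t r)
      ((θ1 + θ2 * hpenDeriv t (pathTime Δ T f ξ r - τ r)) •
        (EuclideanSpace.proj r).comp
          ((adjoint Δ).comp ((fderiv ℝ (fun v => T v ξ) (Δ f)).comp Δ))) f := by
  have hC := (EuclideanSpace.proj r).hasFDerivAt.comp f (hasFDerivAt_pathTime hT)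
  have hh := (hasDerivAt_hpen ht _).comp_hasFDerivAt f (hC.sub_const (τ r))
  refine (((hC.const_mul θ1).const_add (θ0 * d r)).add (hh.const_mul θ2)).congr_fderiv ?_
  rw [add_smul, mul_smul]
  rfl

lemma proj_comp_fderiv_uhat (ht : 0 < t) (hT : DifferentiableAt ℝ (fun v => T v ξ) (Δ f))
    (θ0 θ1 θ2 : ℝ) (d τ : EuclideanSpace ℝ (Fin N)) (r : Fin N) :
    (EuclideanSpace.proj r).comp (fderiv ℝ (fun g => uhat Δ θ0 θ1 θ2 d τ T g ξ t) f) =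
      (θ1 + θ2 * hpenDeriv t (pathTime Δ T f ξ r - τ r)) •
        (EuclideanSpace.proj r).comp
          ((adjoint Δ).comp ((fderiv ℝ (fun v => T v ξ) (Δ f)).comp Δ)) := by
  have hdiff : DifferentiableAt ℝ (fun g => uhat Δ θ0 θ1 θ2 d τ T g ξ t) f :=
    (differentiableAt_piLp 2).mpr fun i =>
      (hasFDerivAt_uhat_apply ht hT θ0 θ1 θ2 d τ i).differentiableAt
  exact ((hasFDerivAt_uhat_apply ht hT θ0 θ1 θ2 d τ r).unique
    ((EuclideanSpace.proj r : EuclideanSpace ℝ (Fin N) →L[ℝ] ℝ).hasFDerivAt.comp f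
      hdiff.hasFDerivAt)).symm

lemma abs_pathTime_apply_sub_le (r : Fin N) :
    |pathTime Δ T f ξ r - pathTime Δ T f ξ' r| ≤ ‖adjoint Δ‖ * ‖T (Δ f) ξ - T (Δ f) ξ'‖ := by
  have hsub : pathTime Δ T f ξ - pathTime Δ T f ξ' = adjoint Δ (T (Δ f) ξ - T (Δ f) ξ') :=
    (map_sub _ _ _).symm
  rw [← Real.norm_eq_abs, ← PiLp.sub_apply, hsub]
  exact (PiLp.norm_apply_le _ r).trans ((adjoint Δ).le_opNorm _)

lemma norm_proj_comp_fderiv_uhat_sub_le (ht : 0 < t) (hθ1 : 0 ≤ θ1) (hθ2 : 0 ≤ θ2)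
    (hT : DifferentiableAt ℝ (fun v => T v ξ) (Δ f))
    (hT' : DifferentiableAt ℝ (fun v => T v ξ') (Δ f))
    (θ0 : ℝ) (d τ : EuclideanSpace ℝ (Fin N)) (r : Fin N) :
    ‖(EuclideanSpace.proj r).comp (fderiv ℝ (fun g => uhat Δ θ0 θ1 θ2 d τ T g ξ t) f) -
        (EuclideanSpace.proj r).comp (fderiv ℝ (fun g => uhat Δ θ0 θ1 θ2 d τ T g ξ' t) f)‖ ≤
      (θ1 + θ2) * (‖adjoint Δ‖ *
          ‖fderiv ℝ (fun v => T v ξ) (Δ f) - fderiv ℝ (fun v => T v ξ') (Δ f)‖ * ‖Δ‖) +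
        θ2 * (‖adjoint Δ‖ * ‖T (Δ f) ξ - T (Δ f) ξ'‖ / (2 * t)) *
          ‖(adjoint Δ).comp ((fderiv ℝ (fun v => T v ξ') (Δ f)).comp Δ)‖ := by
  rw [proj_comp_fderiv_uhat ht hT, proj_comp_fderiv_uhat ht hT']
  refine (norm_smul_sub_smul_le hθ1 hθ2 (hpenDeriv_mem_Icc _ _) _ _).trans ?_
  gcongr ?_ * ?_ + θ2 * ?_ * ?_
  · rw [← comp_sub, ← comp_sub, ← sub_comp]
    refine (norm_proj_comp_le r _).trans ((opNorm_comp_le _ _).trans ?_)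
    rw [mul_assoc]
    gcongr
    exact opNorm_comp_le _ _
  · refine (abs_hpenDeriv_sub_le ht _ _).trans ?_
    gcongr
    simpa only [sub_sub_sub_cancel_right] using abs_pathTime_apply_sub_le r
  · exact norm_proj_comp_le r _

end Disutility

theorem smoothed_disutility_jacobian_rows_lipschitz_in_xi_general
    (A N k : ℕ) (Δ : EuclideanSpace ℝ (Fin N) →L[ℝ] EuclideanSpace ℝ (Fin A))
    (θ0 θ1 θ2 : ℝ) (hθ1 : 0 ≤ θ1) (hθ2 : 0 ≤ θ2)
    (d τ : EuclideanSpace ℝ (Fin N)) (Ξ : Set (EuclideanSpace ℝ (Fin k)))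
    (T : EuclideanSpace ℝ (Fin A) → EuclideanSpace ℝ (Fin k) → EuclideanSpace ℝ (Fin A))
    (𝔽 : Set (EuclideanSpace ℝ (Fin N)))
    (hTdiff : ∀ ξ ∈ Ξ, ContDiff ℝ 1 (fun v => T v ξ))
    (L : ℝ) (hL : 0 < L)
    (hTlip : ∀ v ∈ Δ '' 𝔽, ∀ ξ ∈ Ξ, ∀ ξ' ∈ Ξ, ‖T v ξ - T v ξ'‖ ≤ L * ‖ξ - ξ'‖)
    (hTdlip : ∀ v ∈ Δ '' 𝔽, ∀ ξ ∈ Ξ, ∀ ξ' ∈ Ξ,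
      ‖fderiv ℝ (fun v => T v ξ) v - fderiv ℝ (fun v => T v ξ') v‖ ≤ L * ‖ξ - ξ'‖)
    (C₀' : ℝ)
    (hC₀' : ∀ f ∈ 𝔽, ∀ ξ ∈ Ξ,
      ‖(ContinuousLinearMap.adjoint Δ).comp
          (((fderiv ℝ (fun v => T v ξ) (Δ f)).comp Δ))‖ ≤ C₀') :
    ∀ t : ℝ, 0 < t → ∀ f ∈ 𝔽, ∀ ξ ∈ Ξ, ∀ ξ' ∈ Ξ, ∀ r : Fin N,
      ‖(EuclideanSpace.proj r).comp (fderiv ℝ (fun f => uhat Δ θ0 θ1 θ2 d τ T f ξ t) f) -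
        (EuclideanSpace.proj r).comp
          (fderiv ℝ (fun f => uhat Δ θ0 θ1 θ2 d τ T f ξ' t) f)‖ ≤
        L * ‖ContinuousLinearMap.adjoint Δ‖ *
          (θ1 * ‖Δ‖ + θ2 * ‖Δ‖ + θ2 * C₀' / (2 * t)) * ‖ξ - ξ'‖ := by
  intro t ht f hf ξ hξ ξ' hξ' r
  have hv : Δ f ∈ Δ '' 𝔽 := mem_image_of_mem Δ hf
  have hdiff : ∀ ζ ∈ Ξ, DifferentiableAt ℝ (fun v => T v ζ) (Δ f) := fun ζ hζ =>
    (hTdiff ζ hζ).differentiable one_ne_zero _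
  refine (norm_proj_comp_fderiv_uhat_sub_le ht hθ1 hθ2 (hdiff ξ hξ) (hdiff ξ' hξ') θ0 d τ
    r).trans ?_
  calc _ ≤ (θ1 + θ2) * (‖adjoint Δ‖ * (L * ‖ξ - ξ'‖) * ‖Δ‖) +
          θ2 * (‖adjoint Δ‖ * (L * ‖ξ - ξ'‖) / (2 * t)) * C₀' := by
        gcongr
        · exact hTdlip _ hv ξ hξ ξ' hξ'
        · exact hTlip _ hv ξ hξ ξ' hξ'
        · exact hC₀' f hf ξ' hξ'
    _ = _ := by ring

/-- Lipschitz continuity, in the uncertain parameter `ξ`, of the rows of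
the Jacobian of the smoothed disutility. Under Lipschitz continuity of `T` and
`∇_v T` in `ξ` (with constant `L`) and a uniform bound `C₀'` on `‖Δᵀ ∇_v T(Δf,ξ) Δ‖`,
each row `r` of `∇_f û(f,·,t)` (the functional `w ↦ (∇_f û(f,ξ,t) w)_r`) satisfies
`‖[∇_f û(f,ξ,t)]_r − [∇_f û(f,ξ',t)]_r‖ ≤ L‖Δᵀ‖(θ1‖Δ‖ + θ2‖Δ‖ + θ2 C₀'/(2t))‖ξ − ξ'‖`. -/
theorem smoothed_disutility_jacobian_rows_lipschitz_in_xi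
    (A N k : ℕ) (Δ : EuclideanSpace ℝ (Fin N) →L[ℝ] EuclideanSpace ℝ (Fin A))
    (θ0 θ1 θ2 : ℝ) (hθ0 : 0 ≤ θ0) (hθ1 : 0 ≤ θ1) (hθ2 : 0 ≤ θ2)
    (d τ : EuclideanSpace ℝ (Fin N)) (Ξ : Set (EuclideanSpace ℝ (Fin k)))
    (T : EuclideanSpace ℝ (Fin A) → EuclideanSpace ℝ (Fin k) → EuclideanSpace ℝ (Fin A))
    (𝔽 : Set (EuclideanSpace ℝ (Fin N))) (h𝔽 : IsCompact 𝔽)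
    (hTdiff : ∀ ξ ∈ Ξ, ContDiff ℝ 1 (fun v => T v ξ))
    (L : ℝ) (hL : 0 < L)
    (hTlip : ∀ v ∈ Δ '' 𝔽, ∀ ξ ∈ Ξ, ∀ ξ' ∈ Ξ, ‖T v ξ - T v ξ'‖ ≤ L * ‖ξ - ξ'‖)
    (hTdlip : ∀ v ∈ Δ '' 𝔽, ∀ ξ ∈ Ξ, ∀ ξ' ∈ Ξ,
      ‖fderiv ℝ (fun v => T v ξ) v - fderiv ℝ (fun v => T v ξ') v‖ ≤ L * ‖ξ - ξ'‖)
    (C₀' : ℝ)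
    (hC₀' : ∀ f ∈ 𝔽, ∀ ξ ∈ Ξ,
      ‖(ContinuousLinearMap.adjoint Δ).comp
          (((fderiv ℝ (fun v => T v ξ) (Δ f)).comp Δ))‖ ≤ C₀') :
    ∀ t : ℝ, 0 < t → ∀ f ∈ 𝔽, ∀ ξ ∈ Ξ, ∀ ξ' ∈ Ξ, ∀ r : Fin N,
      ‖(EuclideanSpace.proj r).comp (fderiv ℝ (fun f => uhat Δ θ0 θ1 θ2 d τ T f ξ t) f) -
        (EuclideanSpace.proj r).comp
          (fderiv ℝ (fun f => uhat Δ θ0 θ1 θ2 d τ T f ξ' t) f)‖ ≤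
        L * ‖ContinuousLinearMap.adjoint Δ‖ *
          (θ1 * ‖Δ‖ + θ2 * ‖Δ‖ + θ2 * C₀' / (2 * t)) * ‖ξ - ξ'‖ :=
  smoothed_disutility_jacobian_rows_lipschitz_in_xi_general A N k Δ θ0 θ1 θ2 hθ1 hθ2 d τ Ξ T 𝔽
    hTdiff L hL hTlip hTdlip C₀' hC₀'
end

section
/- Let D ⊆ ℝ^N be convex, Δ ∈ ℝ^{A×N}, c ∈ ℝ^N, and let G : ℝ^A → ℝ^A be strictly monotone on Δ(D), i.e. ⟨G(v) − G(v'), v − v'⟩ > 0 for all v, v' ∈ Δ(D) with v ≠ v'. Define φ(f) = c + Δᵀ G(Δf). If f₁ and f₂ both solve the variational inequality VI(φ, D) (that is, f_i ∈ D and ⟨φ(f_i), g − f_i⟩ ≥ 0 for all g ∈ D), then Δf₁ = Δf₂; i.e., the equilibrium arc flow is unique even though the path-flow solution need not be. -/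
open scoped RealInnerProductSpace

/-- uniqueness of equilibrium arc flows. Let `D ⊆ ℝ^N` be convex,
`φ(f) = c + Δᵀ G(Δf)` with `G` strictly monotone on `Δ(D)`. If `f₁` and `f₂` both solve
the variational inequality `VI(φ, D)`, then `Δf₁ = Δf₂`. -/
theorem vi_unique_arc_flow (A N : ℕ)
    (D : Set (EuclideanSpace ℝ (Fin N))) (hconv : Convex ℝ D)
    (Δ : EuclideanSpace ℝ (Fin N) →L[ℝ] EuclideanSpace ℝ (Fin A))
    (c : EuclideanSpace ℝ (Fin N))
    (G : EuclideanSpace ℝ (Fin A) → EuclideanSpace ℝ (Fin A))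
    (hG : ∀ v ∈ Δ '' D, ∀ v' ∈ Δ '' D, v ≠ v' → 0 < ⟪G v - G v', v - v'⟫)
    (f₁ f₂ : EuclideanSpace ℝ (Fin N)) (hf₁ : f₁ ∈ D) (hf₂ : f₂ ∈ D)
    (hsol₁ : ∀ g ∈ D, 0 ≤ ⟪c + ContinuousLinearMap.adjoint Δ (G (Δ f₁)), g - f₁⟫)
    (hsol₂ : ∀ g ∈ D, 0 ≤ ⟪c + ContinuousLinearMap.adjoint Δ (G (Δ f₂)), g - f₂⟫) :
    Δ f₁ = Δ f₂ := by
  by_contra hne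
  have h1 := hsol₁ f₂ hf₂
  have h2 := hsol₂ f₁ hf₁
  have hpos := hG (Δ f₁) ⟨f₁, hf₁, rfl⟩ (Δ f₂) ⟨f₂, hf₂, rfl⟩ hne
  have key : ⟪G (Δ f₁) - G (Δ f₂), Δ f₁ - Δ f₂⟫ ≤ 0 := by
    have e1 : ⟪c + ContinuousLinearMap.adjoint Δ (G (Δ f₁)), f₂ - f₁⟫
        + ⟪c + ContinuousLinearMap.adjoint Δ (G (Δ f₂)), f₁ - f₂⟫
        = -⟪G (Δ f₁) - G (Δ f₂), Δ f₁ - Δ f₂⟫ := by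
      simp only [inner_add_left, ContinuousLinearMap.adjoint_inner_left, map_sub,
        inner_sub_left, inner_sub_right]
      ring
    nlinarith [h1, h2]
  linarith
end

section
/- Let D ⊆ ℝ^N be closed and convex, let P be a Borel probability measure on Ξ, suppose v ↦ T(v,ξ) is continuous for each ξ ∈ Ξ and ξ ↦ T(v,ξ) is Borel measurable for each v, and suppose there exist t̄ > 0 and a P‑integrable function φ̄ : Ξ → [0,∞) with ‖û(f,ξ,t)‖ ≤ φ̄(ξ) for all f ∈ 𝔽, ξ ∈ Ξ and t ∈ (0, t̄]. Define φ_t(f) = ∫_Ξ û(f,ξ,t) dP(ξ) and φ(f) = ∫_Ξ u(f,ξ) dP(ξ), where u(f,ξ) ∈ ℝ^N has components u_r(f,ξ) = θ0 d_r + θ1 C_r(f,ξ) + θ2 max(C_r(f,ξ) − τ_r, 0). If t_k > 0, t_k → 0, each f_k ∈ 𝔽 solves VI(φ_{t_k}, D), and f_k → f̄, then f̄ solves VI(φ, D). In other words, every cluster point as t ↓ 0 of solutions of the smoothed (MLAPUE) variational inequality is a solution of the unsmoothed (LAPUE) variational inequality. -/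
/-!
Since `|h(z,t) - max(z,0)| ≤ t/4`, continuity of `T(·,ξ)` gives `û(f_k,ξ,t_k) → u(f̄,ξ)` for every
`ξ ∈ Ξ`. With `φ̄` as an integrable dominating function, the integrals `φ_{t_k}(f_k)` converge to
`φ(f̄)`, and the inequalities `⟨φ_{t_k}(f_k), g - f_k⟩ ≥ 0` pass to the limit; `f̄ ∈ D` as `D` is closed.
-/

open MeasureTheory

variable {A N k : ℕ}

/-- The unsmoothed (LAPUE) disutility `u(f,ξ)` with components
`u_r = θ0 d_r + θ1 C_r(f,ξ) + θ2 max(C_r(f,ξ) − τ_r, 0)`. -/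
noncomputable def uLAPUE (Δ : EuclideanSpace ℝ (Fin N) →L[ℝ] EuclideanSpace ℝ (Fin A))
    (θ0 θ1 θ2 : ℝ) (d τ : EuclideanSpace ℝ (Fin N))
    (T : EuclideanSpace ℝ (Fin A) → EuclideanSpace ℝ (Fin k) → EuclideanSpace ℝ (Fin A))
    (f : EuclideanSpace ℝ (Fin N)) (ξ : EuclideanSpace ℝ (Fin k)) :
    EuclideanSpace ℝ (Fin N) :=
  WithLp.toLp 2 (fun r => θ0 * d r + θ1 * pathTime Δ T f ξ r + θ2 * max (pathTime Δ T f ξ r - τ r) 0)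

open Filter Topology
open scoped RealInnerProductSpace

section Restrict

variable {α : Type*} [MeasurableSpace α] {μ : Measure α} {s : Set α}

-- `s` need not be measurable, so `ae_restrict_of_forall_mem` does not apply.
theorem ae_restrict_of_forall_mem_of_nullMeasurableSet {p : α → Prop}
    (hp : NullMeasurableSet {x | p x} (μ.restrict s)) (h : ∀ x ∈ s, p x) :
    ∀ᵐ x ∂μ.restrict s, p x := by
  rw [ae_iff, ← Set.compl_ofPred, Measure.restrict_apply₀ hp.compl]
  convert measure_empty (μ := μ)
  exact Set.eq_empty_of_forall_notMem fun x ⟨hx, hxs⟩ => hx (h x hxs)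

theorem tendsto_setIntegral_of_forall_mem_dominated {ι E : Type*} [Countable ι]
    {l : Filter ι} [l.IsCountablyGenerated] [NormedAddCommGroup E] [NormedSpace ℝ E]
    [MeasurableSpace E] [BorelSpace E] [SecondCountableTopology E]
    {F : ι → α → E} {f : α → E} {bound : α → ℝ}
    (hF : ∀ i, Measurable (F i)) (hf : Measurable f)
    (h_bound : ∀ᶠ i in l, ∀ x ∈ s, ‖F i x‖ ≤ bound x) (h_int : IntegrableOn bound s μ)
    (h_lim : ∀ x ∈ s, Tendsto (fun i => F i x) l (𝓝 (f x))) :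
    Tendsto (fun i => ∫ x in s, F i x ∂μ) l (𝓝 (∫ x in s, f x ∂μ)) := by
  refine tendsto_integral_filter_of_dominated_convergence bound
    (.of_forall fun i => (hF i).aestronglyMeasurable) (h_bound.mono fun i hi => ?_) h_int
    (ae_restrict_of_forall_mem_of_nullMeasurableSet
      (measurableSet_tendsto_fun hF hf).nullMeasurableSet h_lim)
  exact ae_restrict_of_forall_mem_of_nullMeasurableSet
    (nullMeasurableSet_le (hF i).norm.aemeasurable h_int.aemeasurable) hi

end Restrict

theorem IsClosed.inner_nonneg_of_tendsto {ι E : Type*} [NormedAddCommGroup E]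
    [InnerProductSpace ℝ E] {l : Filter ι} [l.NeBot] {D : Set E} (hD : IsClosed D)
    {f v : ι → E} {f₀ v₀ : E} (hf : Tendsto f l (𝓝 f₀)) (hv : Tendsto v l (𝓝 v₀))
    (hfD : ∀ i, f i ∈ D) (hsol : ∀ i, ∀ g ∈ D, 0 ≤ ⟪v i, g - f i⟫) :
    f₀ ∈ D ∧ ∀ g ∈ D, 0 ≤ ⟪v₀, g - f₀⟫ :=
  ⟨hD.mem_of_tendsto hf (.of_forall hfD), fun g hg =>
    ge_of_tendsto (hv.inner (tendsto_const_nhds.sub hf)) (.of_forall fun i => hsol i g hg)⟩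

theorem abs_hpen_sub_max_le {t : ℝ} (ht : 0 < t) (z : ℝ) : |hpen t z - max z 0| ≤ t / 4 := by
  unfold hpen
  split_ifs with h₁ h₂
  · rw [max_eq_right (by linarith)]
    simp only [sub_self, abs_zero]
    positivity
  · rw [abs_le]
    constructor
    · rcases le_total z 0 with hz | hz
      · rw [max_eq_right hz]; have : 0 ≤ (z + t) ^ 2 / (4 * t) := by positivity
        linarith
      · rw [max_eq_left hz, le_sub_iff_add_le, le_div_iff₀ (by positivity)]
        nlinarith [sq_nonneg (z - t)]
    · rw [sub_le_iff_le_add, div_le_iff₀ (by positivity)]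
      rcases le_total z 0 with hz | hz
      · rw [max_eq_right hz]; nlinarith
      · rw [max_eq_left hz]; nlinarith
  · rw [max_eq_left (by linarith), sub_self, abs_zero]
    positivity

theorem tendsto_hpen {ι : Type*} {l : Filter ι} {t z : ι → ℝ} {z₀ : ℝ}
    (ht : Tendsto t l (𝓝[>] 0)) (hz : Tendsto z l (𝓝 z₀)) :
    Tendsto (fun i => hpen (t i) (z i)) l (𝓝 (max z₀ 0)) := by
  obtain ⟨ht₀, htpos⟩ := tendsto_nhdsWithin_iff.1 ht
  have hdiff : Tendsto (fun i => hpen (t i) (z i) - max (z i) 0) l (𝓝 0) := by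
    refine squeeze_zero_norm' (htpos.mono fun i hi => abs_hpen_sub_max_le hi (z i)) ?_
    simpa using ht₀.div_const 4
  simpa using hdiff.add (hz.max (tendsto_const_nhds (x := (0 : ℝ))))

theorem measurable_hpen (t : ℝ) : Measurable (hpen t) := by
  unfold hpen
  refine Measurable.ite measurableSet_Iio measurable_const
    (Measurable.ite measurableSet_Iic ?_ measurable_id)
  fun_prop

section Disutility

variable {Δ : EuclideanSpace ℝ (Fin N) →L[ℝ] EuclideanSpace ℝ (Fin A)}
  {T : EuclideanSpace ℝ (Fin A) → EuclideanSpace ℝ (Fin k) → EuclideanSpace ℝ (Fin A)}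

theorem measurable_pathTime_apply (hT : ∀ v, Measurable fun ξ => T v ξ)
    (f : EuclideanSpace ℝ (Fin N)) (r : Fin N) :
    Measurable fun ξ => pathTime Δ T f ξ r :=
  (measurable_pi_apply r).comp ((WithLp.measurable_ofLp 2 _).comp
    ((ContinuousLinearMap.adjoint Δ).continuous.measurable.comp (hT (Δ f))))

theorem continuous_pathTime {ξ : EuclideanSpace ℝ (Fin k)} (hT : Continuous fun v => T v ξ) :
    Continuous fun f => pathTime Δ T f ξ :=
  (ContinuousLinearMap.adjoint Δ).continuous.comp (hT.comp Δ.continuous)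

variable {θ0 θ1 θ2 : ℝ} {d τ : EuclideanSpace ℝ (Fin N)}

theorem measurable_uhat (hT : ∀ v, Measurable fun ξ => T v ξ)
    (f : EuclideanSpace ℝ (Fin N)) (t : ℝ) :
    Measurable fun ξ => uhat Δ θ0 θ1 θ2 d τ T f ξ t := by
  refine (WithLp.measurable_toLp 2 _).comp (measurable_pi_lambda _ fun r => ?_)
  have hC := measurable_pathTime_apply (Δ := Δ) hT f r
  exact (measurable_const.add (hC.const_mul θ1)).add
    (((measurable_hpen t).comp (hC.sub measurable_const)).const_mul θ2)

theorem measurable_uLAPUE (hT : ∀ v, Measurable fun ξ => T v ξ)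
    (f : EuclideanSpace ℝ (Fin N)) :
    Measurable fun ξ => uLAPUE Δ θ0 θ1 θ2 d τ T f ξ := by
  refine (WithLp.measurable_toLp 2 _).comp (measurable_pi_lambda _ fun r => ?_)
  have hC := measurable_pathTime_apply (Δ := Δ) hT f r
  exact (measurable_const.add (hC.const_mul θ1)).add
    (((hC.sub measurable_const).max measurable_const).const_mul θ2)

theorem tendsto_uhat {ι : Type*} {l : Filter ι} {ξ : EuclideanSpace ℝ (Fin k)}
    (hT : Continuous fun v => T v ξ) {t : ι → ℝ} (ht : Tendsto t l (𝓝[>] 0))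
    {f : ι → EuclideanSpace ℝ (Fin N)} {f₀ : EuclideanSpace ℝ (Fin N)}
    (hf : Tendsto f l (𝓝 f₀)) :
    Tendsto (fun i => uhat Δ θ0 θ1 θ2 d τ T (f i) ξ (t i)) l
      (𝓝 (uLAPUE Δ θ0 θ1 θ2 d τ T f₀ ξ)) := by
  refine ((PiLp.continuous_toLp 2 _).tendsto _).comp (tendsto_pi_nhds.2 fun r => ?_)
  have hC : Tendsto (fun i => pathTime Δ T (f i) ξ r) l (𝓝 (pathTime Δ T f₀ ξ r)) :=
    ((PiLp.continuous_apply 2 _ r).tendsto _).comp (((continuous_pathTime hT).tendsto _).comp hf)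
  exact (tendsto_const_nhds.add (hC.const_mul θ1)).add
    ((tendsto_hpen ht (hC.sub tendsto_const_nhds)).const_mul θ2)

end Disutility

theorem mlapue_cluster_points_solve_lapue_general
    (A N k : ℕ) (Δ : EuclideanSpace ℝ (Fin N) →L[ℝ] EuclideanSpace ℝ (Fin A))
    (θ0 θ1 θ2 : ℝ)
    (d τ : EuclideanSpace ℝ (Fin N)) (Ξ : Set (EuclideanSpace ℝ (Fin k)))
    (T : EuclideanSpace ℝ (Fin A) → EuclideanSpace ℝ (Fin k) → EuclideanSpace ℝ (Fin A))
    (𝔽 : Set (EuclideanSpace ℝ (Fin N)))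
    (D : Set (EuclideanSpace ℝ (Fin N))) (hDclosed : IsClosed D)
    (P : Measure (EuclideanSpace ℝ (Fin k)))
    (hTcont : ∀ ξ ∈ Ξ, Continuous fun v => T v ξ)
    (hTmeas : ∀ v, Measurable fun ξ => T v ξ)
    (tbar : ℝ) (htbar : 0 < tbar)
    (φbar : EuclideanSpace ℝ (Fin k) → ℝ)
    (hφbarInt : IntegrableOn φbar Ξ P)
    (hbound : ∀ f ∈ 𝔽, ∀ ξ ∈ Ξ, ∀ t ∈ Set.Ioc (0 : ℝ) tbar,
      ‖uhat Δ θ0 θ1 θ2 d τ T f ξ t‖ ≤ φbar ξ)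
    (tseq : ℕ → ℝ) (htpos : ∀ n, 0 < tseq n) (htlim : Tendsto tseq atTop (𝓝 0))
    (fseq : ℕ → EuclideanSpace ℝ (Fin N)) (hfF : ∀ n, fseq n ∈ 𝔽)
    (hfD : ∀ n, fseq n ∈ D)
    (hsol : ∀ n, ∀ g ∈ D,
      0 ≤ ⟪∫ ξ in Ξ, uhat Δ θ0 θ1 θ2 d τ T (fseq n) ξ (tseq n) ∂P, g - fseq n⟫)
    (fbar : EuclideanSpace ℝ (Fin N)) (hconv : Tendsto fseq atTop (𝓝 fbar)) :
    fbar ∈ D ∧ ∀ g ∈ D, 0 ≤ ⟪∫ ξ in Ξ, uLAPUE Δ θ0 θ1 θ2 d τ T fbar ξ ∂P, g - fbar⟫ := by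
  have ht : Tendsto tseq atTop (𝓝[>] 0) :=
    tendsto_nhdsWithin_iff.2 ⟨htlim, .of_forall htpos⟩
  have h_bound : ∀ᶠ n in atTop, ∀ ξ ∈ Ξ,
      ‖uhat Δ θ0 θ1 θ2 d τ T (fseq n) ξ (tseq n)‖ ≤ φbar ξ :=
    (htlim.eventually (eventually_le_nhds htbar)).mono fun n hn ξ hξ =>
      hbound _ (hfF n) ξ hξ _ ⟨htpos n, hn⟩
  have h_int := tendsto_setIntegral_of_forall_mem_dominated
    (fun n => measurable_uhat hTmeas (fseq n) (tseq n)) (measurable_uLAPUE hTmeas fbar)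
    h_bound hφbarInt fun ξ hξ => tendsto_uhat (hTcont ξ hξ) ht hconv
  exact hDclosed.inner_nonneg_of_tendsto hconv h_int hfD hsol

/-- cluster points, as `t ↓ 0`, of solutions of the smoothed (MLAPUE)
variational inequality `VI(φ_t, D)` with `φ_t(f) = ∫_Ξ û(f,ξ,t) dP(ξ)` are solutions of
the unsmoothed (LAPUE) variational inequality `VI(φ, D)` with
`φ(f) = ∫_Ξ u(f,ξ) dP(ξ)`. -/
theorem mlapue_cluster_points_solve_lapue
    (A N k : ℕ) (Δ : EuclideanSpace ℝ (Fin N) →L[ℝ] EuclideanSpace ℝ (Fin A))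
    (θ0 θ1 θ2 : ℝ) (hθ0 : 0 ≤ θ0) (hθ1 : 0 ≤ θ1) (hθ2 : 0 ≤ θ2)
    (d τ : EuclideanSpace ℝ (Fin N)) (Ξ : Set (EuclideanSpace ℝ (Fin k)))
    (T : EuclideanSpace ℝ (Fin A) → EuclideanSpace ℝ (Fin k) → EuclideanSpace ℝ (Fin A))
    (𝔽 : Set (EuclideanSpace ℝ (Fin N))) (h𝔽 : IsCompact 𝔽)
    (D : Set (EuclideanSpace ℝ (Fin N))) (hDclosed : IsClosed D) (hDconv : Convex ℝ D)
    (P : Measure (EuclideanSpace ℝ (Fin k))) [IsProbabilityMeasure P]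
    (hTcont : ∀ ξ ∈ Ξ, Continuous fun v => T v ξ)
    (hTmeas : ∀ v, Measurable fun ξ => T v ξ)
    (tbar : ℝ) (htbar : 0 < tbar)
    (φbar : EuclideanSpace ℝ (Fin k) → ℝ) (hφbar0 : ∀ ξ ∈ Ξ, 0 ≤ φbar ξ)
    (hφbarInt : IntegrableOn φbar Ξ P)
    (hbound : ∀ f ∈ 𝔽, ∀ ξ ∈ Ξ, ∀ t ∈ Set.Ioc (0 : ℝ) tbar,
      ‖uhat Δ θ0 θ1 θ2 d τ T f ξ t‖ ≤ φbar ξ)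
    (tseq : ℕ → ℝ) (htpos : ∀ n, 0 < tseq n) (htlim : Tendsto tseq atTop (𝓝 0))
    (fseq : ℕ → EuclideanSpace ℝ (Fin N)) (hfF : ∀ n, fseq n ∈ 𝔽)
    (hfD : ∀ n, fseq n ∈ D)
    (hsol : ∀ n, ∀ g ∈ D,
      0 ≤ ⟪∫ ξ in Ξ, uhat Δ θ0 θ1 θ2 d τ T (fseq n) ξ (tseq n) ∂P, g - fseq n⟫)
    (fbar : EuclideanSpace ℝ (Fin N)) (hconv : Tendsto fseq atTop (𝓝 fbar)) :
    fbar ∈ D ∧ ∀ g ∈ D, 0 ≤ ⟪∫ ξ in Ξ, uLAPUE Δ θ0 θ1 θ2 d τ T fbar ξ ∂P, g - fbar⟫ :=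
  mlapue_cluster_points_solve_lapue_general A N k Δ θ0 θ1 θ2 d τ Ξ T 𝔽 D hDclosed P hTcont hTmeas
    tbar htbar φbar hφbarInt hbound tseq htpos htlim fseq hfF hfD hsol fbar hconv
end

section
/- Let D ⊆ ℝ^N be closed and convex, φ : ℝ^N → ℝ^N continuous, S = {f ∈ D : 0 ∈ φ(f) + N_D(f)}, and f* ∈ S. Define Υ(f) = {φ(f) + w : w ∈ N_D(f)} for f ∈ D and Υ(f) = ∅ otherwise. Assume Υ is strongly metrically regular at f* for 0 with modulus α > 0: there exist ε > 0 and δ > 0 such that dist(f, Υ⁻¹(y)) ≤ α · dist(y, Υ(f)) whenever ‖f − f*‖ ≤ ε and ‖y‖ ≤ δ, and moreover Υ⁻¹(y) ∩ {f : ‖f − f*‖ ≤ ε} is a singleton for every ‖y‖ ≤ δ. Then there exist ε' ∈ (0, ε] and ρ > 0 such that: for every map φ̂ : ℝ^N → ℝ^N with sup_{‖f − f*‖ ≤ ε} ‖φ̂(f) − φ(f)‖ ≤ ρ and every f̂ with ‖f̂ − f*‖ ≤ ε' solving 0 ∈ φ̂(f̂) + N_D(f̂), one has ‖f̂ − f*‖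 ≤ α · sup_{‖f − f*‖ ≤ ε} ‖φ̂(f) − φ(f)‖. -/
/-!
Take `ε' = ε` and `ρ = δ`. A solution `f̂` of the perturbed inequality solves the original one
with right-hand side `y = φ(f̂) - φ̂(f̂)`, i.e. `y ∈ Υ(f̂)`, and `‖y‖ ≤ δ`. Since `0 ∈ Υ(f*)`,
metric regularity at `f*` gives `dist(f*, Υ⁻¹(y)) ≤ α ‖y‖`, and by the single-valued
localization this distance is attained at `f̂`: every other point of `Υ⁻¹(y)` lies outside the
`ε`-ball, hence farther from `f*` than `f̂`.
-/

open scoped RealInnerProductSpace ENNReal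

open Metric

theorem Metric.infEDist_eq_edist_of_unique_le {α : Type*} [PseudoEMetricSpace α]
    {a x : α} {s : Set α} (hx : x ∈ s) (huniq : ∀ z ∈ s, edist a z ≤ edist a x → z = x) :
    infEDist a s = edist a x := by
  refine le_antisymm (infEDist_le_edist_of_mem hx) (le_infEDist.2 fun z hz => ?_)
  rcases le_total (edist a z) (edist a x) with hzx | hxz
  · rw [huniq z hz hzx]
  · exact hxz

theorem Real.le_biSup_of_forall_le {ι : Type*} {s : Set ι} {g : ι → ℝ} {C : ℝ}
    (hC : ∀ z ∈ s, g z ≤ C) {x : ι} (hx : x ∈ s) : g x ≤ ⨆ z ∈ s, g z := by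
  have hbdd : BddAbove (Set.range fun z => ⨆ _ : z ∈ s, g z) :=
    ⟨max C 0, Set.forall_mem_range.2 fun z =>
      Real.iSup_le (fun hz => (hC z hz).trans (le_max_left _ _)) (le_max_right _ _)⟩
  exact le_ciSup_of_le hbdd x (ciSup_pos (f := fun _ => g x) hx).ge

theorem dist_le_mul_norm_of_metricRegular {X Y : Type*} [PseudoMetricSpace X]
    [SeminormedAddGroup Y] {F : X → Set Y} {x₀ x : X} {y : Y} {α ε : ℝ} (hα : 0 ≤ α)
    (h₀ : 0 ∈ F x₀) (hreg : infEDist x₀ {x | y ∈ F x} ≤ ENNReal.ofReal α * infEDist y (F x₀))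
    (hy : y ∈ F x) (hx : dist x x₀ ≤ ε) (huniq : ∀ z, y ∈ F z → dist z x₀ ≤ ε → z = x) :
    dist x x₀ ≤ α * ‖y‖ := by
  have hattained : infEDist x₀ {x | y ∈ F x} = edist x₀ x := by
    refine infEDist_eq_edist_of_unique_le hy fun z hz hzx => huniq z hz ?_
    rw [edist_dist, edist_dist, ENNReal.ofReal_le_ofReal_iff dist_nonneg] at hzx
    rw [dist_comm]
    exact hzx.trans (dist_comm x x₀ ▸ hx)
  have hedist : edist x₀ x ≤ ENNReal.ofReal (α * ‖y‖) :=
    calc edist x₀ x = infEDist x₀ {x | y ∈ F x} := hattained.symm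
      _ ≤ ENNReal.ofReal α * infEDist y (F x₀) := hreg
      _ ≤ ENNReal.ofReal α * ENNReal.ofReal ‖y‖ := by
        gcongr
        exact (infEDist_le_edist_of_mem h₀).trans_eq (by rw [edist_zero_right, ofReal_norm])
      _ = ENNReal.ofReal (α * ‖y‖) := (ENNReal.ofReal_mul hα).symm
  rwa [edist_le_ofReal (by positivity), dist_comm] at hedist

theorem strong_metric_regularity_error_bound_general (N : ℕ)
    (D : Set (EuclideanSpace ℝ (Fin N)))
    (φ : EuclideanSpace ℝ (Fin N) → EuclideanSpace ℝ (Fin N))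
    (Υ : EuclideanSpace ℝ (Fin N) → Set (EuclideanSpace ℝ (Fin N)))
    (hΥ : Υ = fun f => {y | f ∈ D ∧ ∃ w, (∀ g ∈ D, ⟪w, g - f⟫ ≤ 0) ∧ y = φ f + w})
    (S : Set (EuclideanSpace ℝ (Fin N))) (hS : S = {f | 0 ∈ Υ f})
    (fstar : EuclideanSpace ℝ (Fin N)) (hfstar : fstar ∈ S)
    (α ε δ : ℝ) (hα : 0 < α) (hε : 0 < ε) (hδ : 0 < δ)
    (hreg : ∀ f y : EuclideanSpace ℝ (Fin N), ‖f - fstar‖ ≤ ε → ‖y‖ ≤ δ →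
      EMetric.infEdist f {f' | y ∈ Υ f'} ≤ ENNReal.ofReal α * EMetric.infEdist y (Υ f))
    (hsingle : ∀ y : EuclideanSpace ℝ (Fin N), ‖y‖ ≤ δ →
      ∃! f, f ∈ {f' | y ∈ Υ f'} ∩ Metric.closedBall fstar ε) :
    ∃ ε' : ℝ, 0 < ε' ∧ ε' ≤ ε ∧ ∃ ρ : ℝ, 0 < ρ ∧
      ∀ φhat : EuclideanSpace ℝ (Fin N) → EuclideanSpace ℝ (Fin N),
        (∀ f ∈ Metric.closedBall fstar ε, ‖φhat f - φ f‖ ≤ ρ) →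
        ∀ fhat : EuclideanSpace ℝ (Fin N), ‖fhat - fstar‖ ≤ ε' →
          fhat ∈ D → (∀ g ∈ D, 0 ≤ ⟪φhat fhat, g - fhat⟫) →
          ‖fhat - fstar‖ ≤ α * ⨆ f ∈ Metric.closedBall fstar ε, ‖φhat f - φ f‖ := by
  refine ⟨ε, hε, le_rfl, δ, hδ, fun φhat hρ fhat hfhat hfD hVI => ?_⟩
  have hfball : fhat ∈ closedBall fstar ε := mem_closedBall_iff_norm.2 hfhat
  set y := φ fhat - φhat fhat
  have hysup : ‖y‖ ≤ ⨆ f ∈ closedBall fstar ε, ‖φhat f - φ f‖ :=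
    norm_sub_rev (φhat fhat) (φ fhat) ▸ Real.le_biSup_of_forall_le hρ hfball
  have hyδ : ‖y‖ ≤ δ := norm_sub_rev (φhat fhat) (φ fhat) ▸ hρ fhat hfball
  have hyΥ : y ∈ Υ fhat := by
    subst hΥ
    refine ⟨hfD, -φhat fhat, fun g hg => ?_, sub_eq_add_neg _ _⟩
    rw [inner_neg_left]
    linarith [hVI g hg]
  have h₀ : (0 : EuclideanSpace ℝ (Fin N)) ∈ Υ fstar := by rwa [hS] at hfstar
  have hbound : dist fhat fstar ≤ α * ‖y‖ :=
    dist_le_mul_norm_of_metricRegular hα.le h₀ (hreg fstar y (by simp [hε.le]) hyδ) hyΥ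
      hfball fun z hz hzε => (hsingle y hyδ).unique ⟨hz, hzε⟩ ⟨hyΥ, hfball⟩
  rw [dist_eq_norm] at hbound
  exact hbound.trans (mul_le_mul_of_nonneg_left hysup hα.le)

/-- under strong metric regularity of `Υ(f) = φ(f) + N_D(f)` at a
solution `f*` for `0` with modulus `α`, there exist `ε' ∈ (0, ε]` and `ρ > 0` such that
for every perturbation `φ̂` with `sup_{‖f−f*‖≤ε} ‖φ̂(f) − φ(f)‖ ≤ ρ`, any solution `f̂`
of `0 ∈ φ̂(f̂) + N_D(f̂)` with `‖f̂ − f*‖ ≤ ε'` satisfies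
`‖f̂ − f*‖ ≤ α · sup_{‖f−f*‖≤ε} ‖φ̂(f) − φ(f)‖`. -/
theorem strong_metric_regularity_error_bound (N : ℕ)
    (D : Set (EuclideanSpace ℝ (Fin N))) (hDclosed : IsClosed D) (hDconv : Convex ℝ D)
    (φ : EuclideanSpace ℝ (Fin N) → EuclideanSpace ℝ (Fin N)) (hφ : Continuous φ)
    (Υ : EuclideanSpace ℝ (Fin N) → Set (EuclideanSpace ℝ (Fin N)))
    (hΥ : Υ = fun f => {y | f ∈ D ∧ ∃ w, (∀ g ∈ D, ⟪w, g - f⟫ ≤ 0) ∧ y = φ f + w})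
    (S : Set (EuclideanSpace ℝ (Fin N))) (hS : S = {f | 0 ∈ Υ f})
    (fstar : EuclideanSpace ℝ (Fin N)) (hfstar : fstar ∈ S)
    (α ε δ : ℝ) (hα : 0 < α) (hε : 0 < ε) (hδ : 0 < δ)
    (hreg : ∀ f y : EuclideanSpace ℝ (Fin N), ‖f - fstar‖ ≤ ε → ‖y‖ ≤ δ →
      EMetric.infEdist f {f' | y ∈ Υ f'} ≤ ENNReal.ofReal α * EMetric.infEdist y (Υ f))
    (hsingle : ∀ y : EuclideanSpace ℝ (Fin N), ‖y‖ ≤ δ →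
      ∃! f, f ∈ {f' | y ∈ Υ f'} ∩ Metric.closedBall fstar ε) :
    ∃ ε' : ℝ, 0 < ε' ∧ ε' ≤ ε ∧ ∃ ρ : ℝ, 0 < ρ ∧
      ∀ φhat : EuclideanSpace ℝ (Fin N) → EuclideanSpace ℝ (Fin N),
        (∀ f ∈ Metric.closedBall fstar ε, ‖φhat f - φ f‖ ≤ ρ) →
        ∀ fhat : EuclideanSpace ℝ (Fin N), ‖fhat - fstar‖ ≤ ε' →
          fhat ∈ D → (∀ g ∈ D, 0 ≤ ⟪φhat fhat, g - fhat⟫) →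
          ‖fhat - fstar‖ ≤ α * ⨆ f ∈ Metric.closedBall fstar ε, ‖φhat f - φ f‖ :=
  strong_metric_regularity_error_bound_general N D φ Υ hΥ S hS fstar hfstar α ε δ hα hε hδ hreg
    hsingle
end

section
/- Let Z and W be Banach spaces, V ⊆ Z an open set, z₀ ∈ V, 𝒩 : Z → Set W a set-valued map, and φ : V → W continuously Fréchet differentiable with 0 ∈ φ(z₀) + 𝒩(z₀). Suppose z₀ is a strongly regular solution: there exist neighborhoods V_Z of z₀ and V_W of 0 ∈ W and a constant c ≥ 0 such that for every δ ∈ V_W the linearized inclusion δ ∈ φ(z₀) + Dφ(z₀)(z − z₀) + 𝒩(z) has exactly one solution ζ(δ) in V_Z, and ‖ζ(δ₁) − ζ(δ₂)‖ ≤ c ‖δ₁ − δ₂‖ for all δ₁, δ₂ ∈ V_W. For continuously differentiable ψ : V → W set ‖ψ‖_{1,V} = sup_{z∈V} ‖ψ(z)‖ + sup_{z∈V} ‖Dψ(z)‖. Then there exist ε > 0, a neighborhood U₀ of z₀, and κ ≥ 0 such that for every continuously differentiable ψ : V → W with ‖ψ − φ‖_{1,V} ≤ ε, the inclusion 0 ∈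 ψ(z) + 𝒩(z) has a unique solution z̄(ψ) in U₀, and ‖z̄(ψ₁) − z̄(ψ₂)‖ ≤ κ ‖ψ₁ − ψ₂‖_{1,V} for any two such perturbations ψ₁, ψ₂. -/
/-!
A point `z` near `z₀` solves `0 ∈ ψ z + 𝒩 z` exactly when `δ = φ z₀ + Dφ(z₀)(z - z₀) - ψ z`
is a right-hand side for which `z` solves the linearized inclusion, i.e. exactly when `z` is a
fixed point of `T_ψ z = ζ(φ z₀ + Dφ(z₀)(z - z₀) - ψ z)`. As `φ` is strictly differentiable at
`z₀` and `ψ - φ` is small in `C¹`, the argument of `ζ` is Lipschitz with a small constant on a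
small ball around `z₀`, so `T_ψ` is a `1/2`-contraction of that ball into itself and has a unique
fixed point there. Comparing the fixed points of `T_{ψ₁}` and `T_{ψ₂}` gives the Lipschitz bound
with `κ = 2 max c 0`.
-/

open Topology

variable {Z W : Type*} [NormedAddCommGroup Z] [NormedSpace ℝ Z] [CompleteSpace Z]
  [NormedAddCommGroup W] [NormedSpace ℝ W] [CompleteSpace W]

/-- The `C¹` norm `‖ψ‖_{1,V} = sup_{z∈V} ‖ψ z‖ + sup_{z∈V} ‖Dψ(z)‖` of a map on `V`. -/
noncomputable def norm1 (V : Set Z) (ψ : Z → W) : ℝ :=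
  (⨆ z ∈ V, ‖ψ z‖) + (⨆ z ∈ V, ‖fderiv ℝ ψ z‖)

open Metric Set Function NNReal

section FixedPoint

variable {X : Type*}

theorem one_sub_mul_dist_le_of_isFixedPt [PseudoMetricSpace X] {s : Set X} {T₁ T₂ : X → X}
    {q : ℝ≥0} (hT₁ : LipschitzOnWith q T₁ s) {x₁ x₂ : X} (hx₁ : x₁ ∈ s) (hx₂ : x₂ ∈ s)
    (h₁ : IsFixedPt T₁ x₁) (h₂ : IsFixedPt T₂ x₂) :
    (1 - q) * dist x₁ x₂ ≤ dist (T₁ x₂) (T₂ x₂) := by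
  have := calc
    dist x₁ x₂ = dist (T₁ x₁) (T₂ x₂) := by rw [h₁, h₂]
    _ ≤ dist (T₁ x₁) (T₁ x₂) + dist (T₁ x₂) (T₂ x₂) := dist_triangle _ _ _
    _ ≤ q * dist x₁ x₂ + dist (T₁ x₂) (T₂ x₂) := by gcongr; exact hT₁.dist_le_mul _ hx₁ _ hx₂
  linarith

theorem LipschitzOnWith.mapsTo_closedBall [PseudoMetricSpace X] {Y : Type*} [PseudoMetricSpace Y]
    {g : X → Y} {M : ℝ≥0} {x₀ : X} {ρ : ℝ} (hg : LipschitzOnWith M g (closedBall x₀ ρ)) :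
    MapsTo g (closedBall x₀ ρ) (closedBall (g x₀) (M * ρ)) := fun x hx =>
  (hg.dist_le_mul x hx x₀ (mem_closedBall_self (dist_nonneg.trans hx))).trans
    (by gcongr; exact hx)

theorem exists_unique_isFixedPt_closedBall [MetricSpace X] [CompleteSpace X] {T : X → X}
    {x₀ : X} {ρ : ℝ} {q : ℝ≥0} (hq : q < 1) (hT : LipschitzOnWith q T (closedBall x₀ ρ))
    (hx₀ : dist (T x₀) x₀ ≤ (1 - q) * ρ) :
    ∃! x, x ∈ closedBall x₀ ρ ∧ IsFixedPt T x := by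
  have hρ : 0 ≤ ρ := nonneg_of_mul_nonneg_right (dist_nonneg.trans hx₀) (by simpa using hq)
  have hmaps : MapsTo T (closedBall x₀ ρ) (closedBall x₀ ρ) := fun x hx => by
    have := hT.mapsTo_closedBall hx
    rw [mem_closedBall] at this ⊢
    linarith [dist_triangle (T x) (T x₀) x₀]
  obtain ⟨x, hx, hfix, -⟩ := ContractingWith.exists_fixedPoint' isClosed_closedBall.isComplete
    hmaps ⟨hq, fun y z => hT y.2 z.2⟩ (mem_closedBall_self hρ) (edist_ne_top _ _)
  refine ⟨x, ⟨hx, hfix⟩, fun y ⟨hy, hyfix⟩ => dist_le_zero.1 ?_⟩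
  have := one_sub_mul_dist_le_of_isFixedPt hT hy hx hyfix hfix
  rw [dist_self] at this
  exact nonpos_of_mul_nonpos_right this (by simpa using hq)

end FixedPoint

theorem le_biSup_of_bddAbove_image {α β : Type*} [ConditionallyCompleteLattice β] {s : Set α}
    {f : α → β} (hf : BddAbove (f '' s)) {a : α} (ha : a ∈ s) : f a ≤ ⨆ x ∈ s, f x :=
  le_ciSup₂ (f := fun x (_ : x ∈ s) => f x) (by convert hf; ext; simp [eq_comm]) a ha

section NormedGroup

variable {α G : Type*} [SeminormedAddCommGroup G]

theorem biSup_norm_nonneg (s : Set α) (f : α → G) : 0 ≤ ⨆ x ∈ s, ‖f x‖ :=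
  Real.iSup_nonneg fun _ => Real.iSup_nonneg fun _ => norm_nonneg _

theorem bddAbove_image_norm_sub {s : Set α} {f g k : α → G}
    (hf : BddAbove ((fun x => ‖f x - k x‖) '' s)) (hg : BddAbove ((fun x => ‖g x - k x‖) '' s)) :
    BddAbove ((fun x => ‖f x - g x‖) '' s) := by
  obtain ⟨B₁, hB₁⟩ := hf
  obtain ⟨B₂, hB₂⟩ := hg
  refine ⟨B₁ + B₂, ?_⟩
  rintro _ ⟨x, hx, rfl⟩
  calc ‖f x - g x‖ ≤ ‖f x - k x‖ + ‖g x - k x‖ := by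
        simpa only [norm_sub_rev (k x)] using norm_sub_le_norm_sub_add_norm_sub (f x) (k x) (g x)
    _ ≤ B₁ + B₂ := add_le_add (hB₁ ⟨x, hx, rfl⟩) (hB₂ ⟨x, hx, rfl⟩)

end NormedGroup

section C1Norm

variable {E F : Type*} [NormedAddCommGroup E] [NormedSpace ℝ E]
  [NormedAddCommGroup F] [NormedSpace ℝ F] {V : Set E} {h : E → F}

theorem norm_le_norm1 (hb : BddAbove ((fun z => ‖h z‖) '' V)) {z : E} (hz : z ∈ V) :
    ‖h z‖ ≤ norm1 V h := by
  have := le_biSup_of_bddAbove_image hb hz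
  have := biSup_norm_nonneg V (fderiv ℝ h)
  unfold norm1
  linarith

theorem norm_fderiv_le_norm1 (hb : BddAbove ((fun z => ‖fderiv ℝ h z‖) '' V)) {z : E}
    (hz : z ∈ V) : ‖fderiv ℝ h z‖ ≤ norm1 V h := by
  have := le_biSup_of_bddAbove_image hb hz
  have := biSup_norm_nonneg V h
  unfold norm1
  linarith

theorem lipschitzOnWith_of_norm1_le (hV : IsOpen V) (hh : DifferentiableOn ℝ h V)
    (hb : BddAbove ((fun z => ‖fderiv ℝ h z‖) '' V)) {ε : ℝ≥0} (hε : norm1 V h ≤ ε) {S : Set E}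
    (hS : Convex ℝ S) (hSV : S ⊆ V) : LipschitzOnWith ε h S :=
  hS.lipschitzOnWith_of_nnnorm_fderiv_le
    (fun _ hz => hh.differentiableAt (hV.mem_nhds (hSV hz)))
    (fun _ hz => (norm_fderiv_le_norm1 hb (hSV hz)).trans hε)

end C1Norm

section GeneralizedEquation

variable {E F : Type*} [NormedAddCommGroup E] [NormedSpace ℝ E]
  [NormedAddCommGroup F] [NormedSpace ℝ F]

def linResidual (a : F) (A : E →L[ℝ] F) (z₀ : E) (ψ : E → F) (z : E) : F :=
  a + A (z - z₀) - ψ z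

theorem zero_eq_add_iff_linResidual_eq (a : F) (A : E →L[ℝ] F) (z₀ : E) (ψ : E → F) (z : E)
    (w : F) : 0 = ψ z + w ↔ linResidual a A z₀ ψ z = a + A (z - z₀) + w := by
  rw [linResidual, sub_eq_add_neg, add_right_inj, eq_comm, add_eq_zero_iff_neg_eq]

theorem solves_iff_isFixedPt {𝒩 : E → Set F} {ζ : F → E} {a : F} {A : E →L[ℝ] F} {z₀ : E}
    {VZ : Set E} {VW : Set F}
    (hζsol : ∀ δ ∈ VW, ∃ w ∈ 𝒩 (ζ δ), δ = a + A (ζ δ - z₀) + w)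
    (hζuniq : ∀ δ ∈ VW, ∀ z ∈ VZ, (∃ w ∈ 𝒩 z, δ = a + A (z - z₀) + w) → z = ζ δ)
    {ψ : E → F} {z : E} (hz : z ∈ VZ) (hr : linResidual a A z₀ ψ z ∈ VW) :
    (∃ w ∈ 𝒩 z, 0 = ψ z + w) ↔ IsFixedPt (ζ ∘ linResidual a A z₀ ψ) z := by
  simp only [zero_eq_add_iff_linResidual_eq a A z₀]
  refine ⟨fun hsol => (hζuniq _ hr z hz hsol).symm, fun hfix => ?_⟩
  obtain ⟨w, hw, heq⟩ := hζsol _ hr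
  replace hfix : ζ (linResidual a A z₀ ψ z) = z := hfix
  rw [hfix] at hw heq
  exact ⟨w, hw, heq⟩

theorem ApproximatesLinearOn.add_lipschitzOnWith {f g : E → F} {A : E →L[ℝ] F} {s : Set E}
    {c K : ℝ≥0} (hf : ApproximatesLinearOn f A s c) (hg : LipschitzOnWith K g s) :
    ApproximatesLinearOn (fun x => f x + g x) A s (c + K) := by
  rw [ApproximatesLinearOn.approximatesLinearOn_iff_lipschitzOnWith] at hf ⊢
  have : (fun x => f x + g x) - ⇑A = fun x => (f - ⇑A) x + g x := by
    funext x
    simp only [Pi.sub_apply]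
    abel
  rw [this]
  exact hf.add hg

theorem ApproximatesLinearOn.lipschitzOnWith_linResidual {ψ : E → F} {A : E →L[ℝ] F}
    {s : Set E} {c : ℝ≥0} (hψ : ApproximatesLinearOn ψ A s c) (a : F) (z₀ : E) :
    LipschitzOnWith c (linResidual a A z₀ ψ) s := by
  refine LipschitzOnWith.of_dist_le_mul fun x hx y hy => ?_
  have : linResidual a A z₀ ψ x - linResidual a A z₀ ψ y = -(ψ x - ψ y - A (x - y)) := by
    simp only [linResidual, map_sub]
    abel
  rw [dist_eq_norm, dist_eq_norm, this, norm_neg]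
  exact hψ x hx y hy

theorem linResidual_contraction_of_approximatesLinearOn {ζ : F → E} {K : ℝ≥0} {VW : Set F}
    (hζ : LipschitzOnWith K ζ VW) {z₀ : E} (hζ₀ : ζ 0 = z₀) {τ : ℝ} (hτ : ball 0 τ ⊆ VW)
    {φ ψ : E → F} {A : E →L[ℝ] F} {ρ : ℝ} {M ε : ℝ≥0}
    (hψ : ApproximatesLinearOn ψ A (closedBall z₀ ρ) M) (hψ₀ : ‖ψ z₀ - φ z₀‖ ≤ ε)
    (hρ : 0 ≤ ρ) (hMρ : M * ρ + ε < τ) (hKM : K * M ≤ 1 / 2) (hKε : K * ε ≤ ρ / 2) :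
    MapsTo (linResidual (φ z₀) A z₀ ψ) (closedBall z₀ ρ) VW ∧
      LipschitzOnWith (1 / 2) (ζ ∘ linResidual (φ z₀) A z₀ ψ) (closedBall z₀ ρ) ∧
      dist (ζ (linResidual (φ z₀) A z₀ ψ z₀)) z₀ ≤ ρ / 2 := by
  set r := linResidual (φ z₀) A z₀ ψ
  have hr := hψ.lipschitzOnWith_linResidual (φ z₀) z₀
  have hr₀ : ‖r z₀‖ ≤ ε := by simpa [r, linResidual, norm_sub_rev] using hψ₀
  have hmaps : MapsTo r (closedBall z₀ ρ) VW := fun z hz => by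
    refine hτ (mem_ball_zero_iff.2 ?_)
    calc ‖r z‖ ≤ dist (r z) (r z₀) + ‖r z₀‖ := by
          simpa only [dist_zero_right] using dist_triangle (r z) (r z₀) 0
      _ ≤ M * ρ + ε := add_le_add (hr.mapsTo_closedBall hz) hr₀
      _ < τ := hMρ
  refine ⟨hmaps, (hζ.comp hr hmaps).weaken hKM, ?_⟩
  calc dist (ζ (r z₀)) z₀ = dist (ζ (r z₀)) (ζ 0) := by rw [hζ₀]
    _ ≤ K * dist (r z₀) 0 :=
      hζ.dist_le_mul _ (hmaps (mem_closedBall_self hρ)) _ (hτ (mem_ball_self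
        ((add_nonneg (mul_nonneg M.coe_nonneg hρ) ε.coe_nonneg).trans_lt hMρ)))
    _ ≤ K * ε := by rw [dist_zero_right]; gcongr
    _ ≤ ρ / 2 := hKε

theorem exists_closedBall_contraction {ζ : F → E} {K : ℝ≥0} {VW : Set F} (hVW : VW ∈ 𝓝 0)
    (hζ : LipschitzOnWith K ζ VW) {z₀ : E} (hζ₀ : ζ 0 = z₀) {φ : E → F} {A : E →L[ℝ] F}
    (hφ : HasStrictFDerivAt φ A z₀) {U : Set E} (hU : U ∈ 𝓝 z₀) :
    ∃ ε : ℝ≥0, 0 < ε ∧ ∃ ρ > 0, closedBall z₀ ρ ⊆ U ∧ ∀ ψ : E → F, ‖ψ z₀ - φ z₀‖ ≤ ε →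
      LipschitzOnWith ε (fun z => ψ z - φ z) (closedBall z₀ ρ) →
      MapsTo (linResidual (φ z₀) A z₀ ψ) (closedBall z₀ ρ) VW ∧
      LipschitzOnWith (1 / 2) (ζ ∘ linResidual (φ z₀) A z₀ ψ) (closedBall z₀ ρ) ∧
      dist (ζ (linResidual (φ z₀) A z₀ ψ z₀)) z₀ ≤ ρ / 2 := by
  obtain ⟨τ, hτ, hτVW⟩ := Metric.mem_nhds_iff.1 hVW
  -- `η = 1 / (4 (K + 1))`, `ρ ≤ min 1 τ` and `ε = η ρ` give `K (η + ε) ≤ 1 / 2`,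
  -- `(η + ε) ρ + ε < τ` and `K ε ≤ ρ / 2`
  set η : ℝ≥0 := (4 * (K + 1))⁻¹
  have hη : 0 < η := by positivity
  have hηK : (η : ℝ) * (4 * (K + 1)) = 1 := by
    simp only [η, NNReal.coe_inv, NNReal.coe_mul, NNReal.coe_add, NNReal.coe_one, NNReal.coe_ofNat]
    field_simp
  obtain ⟨s, hs, hφs⟩ := hφ.approximates_deriv_on_nhds (Or.inr hη)
  obtain ⟨ρ₀, hρ₀, hρ₀U⟩ := nhds_basis_closedBall.mem_iff.1 (Filter.inter_mem hU hs)
  set ρ := min ρ₀ (min 1 τ)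
  have hρ : 0 < ρ := lt_min hρ₀ (lt_min one_pos hτ)
  have hρ1 : ρ ≤ 1 := (min_le_right _ _).trans (min_le_left _ _)
  have hρτ : ρ ≤ τ := (min_le_right _ _).trans (min_le_right _ _)
  have hρU : closedBall z₀ ρ ⊆ U ∩ s := (closedBall_subset_closedBall (min_le_left _ _)).trans hρ₀U
  have hε : (ρ.toNNReal : ℝ) = ρ := Real.coe_toNNReal ρ hρ.le
  refine ⟨η * ρ.toNNReal, by positivity, ρ, hρ, fun z hz => (hρU hz).1, fun ψ hψ₀ hψ => ?_⟩
  have hψA : ApproximatesLinearOn ψ A (closedBall z₀ ρ) (η + η * ρ.toNNReal) := by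
    simpa only [add_sub_cancel] using
      (hφs.mono_set fun z hz => (hρU hz).2).add_lipschitzOnWith hψ
  have hηρρ : (η : ℝ) * ρ * ρ ≤ η * ρ := mul_le_of_le_one_right (by positivity) hρ1
  refine linResidual_contraction_of_approximatesLinearOn hζ hζ₀ hτVW hψA hψ₀ hρ.le ?_ ?_ ?_
  · push_cast [hε]
    nlinarith [K.coe_nonneg, η.coe_nonneg]
  · rw [← NNReal.coe_le_coe]
    push_cast [hε]
    nlinarith [K.coe_nonneg, η.coe_nonneg]
  · push_cast [hε]
    nlinarith [K.coe_nonneg, η.coe_nonneg]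

theorem dist_linResidual (a : F) (A : E →L[ℝ] F) (z₀ : E) (ψ₁ ψ₂ : E → F) (z : E) :
    dist (linResidual a A z₀ ψ₁ z) (linResidual a A z₀ ψ₂ z) = ‖ψ₁ z - ψ₂ z‖ := by
  rw [dist_eq_norm, linResidual, linResidual, sub_sub_sub_cancel_left, norm_sub_rev]

theorem norm_sub_le_of_isFixedPt_linResidual {ζ : F → E} {K : ℝ≥0} {VW : Set F}
    (hζ : LipschitzOnWith K ζ VW) {a : F} {A : E →L[ℝ] F} {z₀ : E} {ψ₁ ψ₂ : E → F} {S : Set E}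
    (hT₁ : LipschitzOnWith (1 / 2) (ζ ∘ linResidual a A z₀ ψ₁) S) {z₁ z₂ : E} (hz₁ : z₁ ∈ S)
    (hz₂ : z₂ ∈ S) (h₁ : IsFixedPt (ζ ∘ linResidual a A z₀ ψ₁) z₁)
    (h₂ : IsFixedPt (ζ ∘ linResidual a A z₀ ψ₂) z₂) (h₁VW : linResidual a A z₀ ψ₁ z₂ ∈ VW)
    (h₂VW : linResidual a A z₀ ψ₂ z₂ ∈ VW) : ‖z₁ - z₂‖ ≤ 2 * K * ‖ψ₁ z₂ - ψ₂ z₂‖ := by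
  have h := one_sub_mul_dist_le_of_isFixedPt hT₁ hz₁ hz₂ h₁ h₂
  have hζz₂ := hζ.dist_le_mul _ h₁VW _ h₂VW
  rw [dist_linResidual] at hζz₂
  rw [← dist_eq_norm]
  norm_num at h
  linarith

end GeneralizedEquation

theorem robinson_strong_regularity_general
    (V : Set Z) (hV : IsOpen V) (z₀ : Z) (hz₀ : z₀ ∈ V)
    (𝒩 : Z → Set W) (φ : Z → W) (hφ : ContDiffOn ℝ 1 φ V)
    (hsol : ∃ w ∈ 𝒩 z₀, (0 : W) = φ z₀ + w)
    (VZ : Set Z) (hVZ : VZ ∈ 𝓝 z₀) (VW : Set W) (hVW : VW ∈ 𝓝 (0 : W))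
    (c : ℝ) (ζ : W → Z)
    (hζsol : ∀ δ ∈ VW, ζ δ ∈ VZ ∧
      ∃ w ∈ 𝒩 (ζ δ), δ = φ z₀ + fderiv ℝ φ z₀ (ζ δ - z₀) + w)
    (hζuniq : ∀ δ ∈ VW, ∀ z ∈ VZ,
      (∃ w ∈ 𝒩 z, δ = φ z₀ + fderiv ℝ φ z₀ (z - z₀) + w) → z = ζ δ)
    (hζlip : ∀ δ₁ ∈ VW, ∀ δ₂ ∈ VW, ‖ζ δ₁ - ζ δ₂‖ ≤ c * ‖δ₁ - δ₂‖) :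
    ∃ ε : ℝ, 0 < ε ∧ ∃ U₀ ∈ 𝓝 z₀, ∃ κ : ℝ, 0 ≤ κ ∧
      (∀ ψ : Z → W, ContDiffOn ℝ 1 ψ V →
        BddAbove ((fun z => ‖ψ z - φ z‖) '' V) →
        BddAbove ((fun z => ‖fderiv ℝ (fun z => ψ z - φ z) z‖) '' V) →
        norm1 V (fun z => ψ z - φ z) ≤ ε →
        ∃! z : Z, z ∈ U₀ ∧ ∃ w ∈ 𝒩 z, (0 : W) = ψ z + w) ∧
      (∀ ψ₁ ψ₂ : Z → W, ContDiffOn ℝ 1 ψ₁ V → ContDiffOn ℝ 1 ψ₂ V →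
        BddAbove ((fun z => ‖ψ₁ z - φ z‖) '' V) →
        BddAbove ((fun z => ‖fderiv ℝ (fun z => ψ₁ z - φ z) z‖) '' V) →
        BddAbove ((fun z => ‖ψ₂ z - φ z‖) '' V) →
        BddAbove ((fun z => ‖fderiv ℝ (fun z => ψ₂ z - φ z) z‖) '' V) →
        norm1 V (fun z => ψ₁ z - φ z) ≤ ε → norm1 V (fun z => ψ₂ z - φ z) ≤ ε →
        ∀ z₁ z₂ : Z,
          z₁ ∈ U₀ → (∃ w ∈ 𝒩 z₁, (0 : W) = ψ₁ z₁ + w) →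
          z₂ ∈ U₀ → (∃ w ∈ 𝒩 z₂, (0 : W) = ψ₂ z₂ + w) →
          ‖z₁ - z₂‖ ≤ κ * norm1 V (fun z => ψ₁ z - ψ₂ z)) := by
  obtain ⟨w₀, hw₀, h₀⟩ := hsol
  have hζ₀ : ζ 0 = z₀ := (hζuniq 0 (mem_of_mem_nhds hVW) z₀ (mem_of_mem_nhds hVZ)
    ⟨w₀, hw₀, by simpa using h₀⟩).symm
  have hζ : LipschitzOnWith c.toNNReal ζ VW :=
    .of_dist_le' fun δ₁ h₁ δ₂ h₂ => by simpa only [dist_eq_norm] using hζlip δ₁ h₁ δ₂ h₂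
  obtain ⟨ε, hε, ρ, hρ, hρU, hT⟩ := exists_closedBall_contraction hVW hζ hζ₀
    ((hφ.contDiffAt (hV.mem_nhds hz₀)).hasStrictFDerivAt one_ne_zero)
    (Filter.inter_mem hVZ (hV.mem_nhds hz₀))
  have hsolves : ∀ ψ, MapsTo (linResidual (φ z₀) (fderiv ℝ φ z₀) z₀ ψ) (closedBall z₀ ρ) VW →
      ∀ z ∈ closedBall z₀ ρ, (∃ w ∈ 𝒩 z, (0 : W) = ψ z + w) ↔
        IsFixedPt (ζ ∘ linResidual (φ z₀) (fderiv ℝ φ z₀) z₀ ψ) z :=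
    fun ψ hψ z hz => solves_iff_isFixedPt (fun δ hδ => (hζsol δ hδ).2) hζuniq (hρU hz).1 (hψ hz)
  have hadmissible : ∀ ψ, ContDiffOn ℝ 1 ψ V →
      BddAbove ((fun z => ‖ψ z - φ z‖) '' V) →
      BddAbove ((fun z => ‖fderiv ℝ (fun z => ψ z - φ z) z‖) '' V) →
      norm1 V (fun z => ψ z - φ z) ≤ ε →
      ‖ψ z₀ - φ z₀‖ ≤ ε ∧ LipschitzOnWith ε (fun z => ψ z - φ z) (closedBall z₀ ρ) :=
    fun ψ hψ hb hb' hn => ⟨(norm_le_norm1 hb hz₀).trans hn,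
      lipschitzOnWith_of_norm1_le hV ((hψ.sub hφ).differentiableOn one_ne_zero) hb' hn
        (convex_closedBall _ _) fun _ hz => (hρU hz).2⟩
  refine ⟨ε, hε, closedBall z₀ ρ, closedBall_mem_nhds z₀ hρ, 2 * c.toNNReal, by positivity,
    fun ψ hψ hb hb' hn => ?_, fun ψ₁ ψ₂ hψ₁ hψ₂ hb₁ hb₁' hb₂ hb₂' hn₁ hn₂ z₁ z₂ hz₁ hs₁ hz₂ hs₂ => ?_⟩
  · obtain ⟨hmaps, hT₁, hcentre⟩ := (hadmissible ψ hψ hb hb' hn).elim (hT ψ)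
    refine (existsUnique_congr fun z => and_congr_right (hsolves ψ hmaps z)).2 ?_
    exact exists_unique_isFixedPt_closedBall (by norm_num) hT₁ (by norm_num; linarith)
  · obtain ⟨hmaps₁, hT₁, -⟩ := (hadmissible ψ₁ hψ₁ hb₁ hb₁' hn₁).elim (hT ψ₁)
    obtain ⟨hmaps₂, -, -⟩ := (hadmissible ψ₂ hψ₂ hb₂ hb₂' hn₂).elim (hT ψ₂)
    calc ‖z₁ - z₂‖ ≤ 2 * c.toNNReal * ‖ψ₁ z₂ - ψ₂ z₂‖ :=
          norm_sub_le_of_isFixedPt_linResidual hζ hT₁ hz₁ hz₂ ((hsolves ψ₁ hmaps₁ z₁ hz₁).1 hs₁)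
            ((hsolves ψ₂ hmaps₂ z₂ hz₂).1 hs₂) (hmaps₁ hz₂) (hmaps₂ hz₂)
      _ ≤ 2 * c.toNNReal * norm1 V (fun z => ψ₁ z - ψ₂ z) := by
          gcongr
          exact norm_le_norm1 (bddAbove_image_norm_sub hb₁ hb₂) (hρU hz₂).2

/-- Robinson's strong regularity theorem: if `z₀` is a strongly regular
solution of the generalized equation `0 ∈ φ(z) + 𝒩(z)`, then every `C¹` perturbation
`ψ` of `φ` which is close to `φ` in the `C¹` norm `‖·‖_{1,V}` admits a unique solution
`z̄(ψ)` of `0 ∈ ψ(z) + 𝒩(z)` near `z₀`, and `z̄(·)` is Lipschitz with respect to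
`‖·‖_{1,V}`. -/
theorem robinson_strong_regularity
    (V : Set Z) (hV : IsOpen V) (z₀ : Z) (hz₀ : z₀ ∈ V)
    (𝒩 : Z → Set W) (φ : Z → W) (hφ : ContDiffOn ℝ 1 φ V)
    (hsol : ∃ w ∈ 𝒩 z₀, (0 : W) = φ z₀ + w)
    (VZ : Set Z) (hVZ : VZ ∈ 𝓝 z₀) (VW : Set W) (hVW : VW ∈ 𝓝 (0 : W))
    (c : ℝ) (hc : 0 ≤ c) (ζ : W → Z)
    (hζsol : ∀ δ ∈ VW, ζ δ ∈ VZ ∧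
      ∃ w ∈ 𝒩 (ζ δ), δ = φ z₀ + fderiv ℝ φ z₀ (ζ δ - z₀) + w)
    (hζuniq : ∀ δ ∈ VW, ∀ z ∈ VZ,
      (∃ w ∈ 𝒩 z, δ = φ z₀ + fderiv ℝ φ z₀ (z - z₀) + w) → z = ζ δ)
    (hζlip : ∀ δ₁ ∈ VW, ∀ δ₂ ∈ VW, ‖ζ δ₁ - ζ δ₂‖ ≤ c * ‖δ₁ - δ₂‖) :
    ∃ ε : ℝ, 0 < ε ∧ ∃ U₀ ∈ 𝓝 z₀, ∃ κ : ℝ, 0 ≤ κ ∧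
      (∀ ψ : Z → W, ContDiffOn ℝ 1 ψ V →
        BddAbove ((fun z => ‖ψ z - φ z‖) '' V) →
        BddAbove ((fun z => ‖fderiv ℝ (fun z => ψ z - φ z) z‖) '' V) →
        norm1 V (fun z => ψ z - φ z) ≤ ε →
        ∃! z : Z, z ∈ U₀ ∧ ∃ w ∈ 𝒩 z, (0 : W) = ψ z + w) ∧
      (∀ ψ₁ ψ₂ : Z → W, ContDiffOn ℝ 1 ψ₁ V → ContDiffOn ℝ 1 ψ₂ V →
        BddAbove ((fun z => ‖ψ₁ z - φ z‖) '' V) →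
        BddAbove ((fun z => ‖fderiv ℝ (fun z => ψ₁ z - φ z) z‖) '' V) →
        BddAbove ((fun z => ‖ψ₂ z - φ z‖) '' V) →
        BddAbove ((fun z => ‖fderiv ℝ (fun z => ψ₂ z - φ z) z‖) '' V) →
        norm1 V (fun z => ψ₁ z - φ z) ≤ ε → norm1 V (fun z => ψ₂ z - φ z) ≤ ε →
        ∀ z₁ z₂ : Z,
          z₁ ∈ U₀ → (∃ w ∈ 𝒩 z₁, (0 : W) = ψ₁ z₁ + w) →
          z₂ ∈ U₀ → (∃ w ∈ 𝒩 z₂, (0 : W) = ψ₂ z₂ + w) →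
          ‖z₁ - z₂‖ ≤ κ * norm1 V (fun z => ψ₁ z - ψ₂ z)) :=
  robinson_strong_regularity_general V hV z₀ hz₀ 𝒩 φ hφ hsol VZ hVZ VW hVW c ζ hζsol hζuniq hζlip
end

section
/- Suppose L > 0 satisfies ‖T(v,ξ) − T(v,ξ')‖ ≤ L‖ξ − ξ'‖ for all v ∈ V and all ξ, ξ' ∈ Ξ, and let Q₁, Q₂ be Borel probability measures on Ξ with finite first moments such that ξ ↦ û(f,ξ,t) is Q₁- and Q₂-integrable for every f ∈ 𝔽. Then for every t > 0, sup_{f∈𝔽} ‖ ∫_Ξ û(f,ξ,t) dQ₁(ξ) − ∫_Ξ û(f,ξ,t) dQ₂(ξ) ‖ ≤ L ‖Δᵀ‖ (θ1 + θ2) · dl_K(Q₁, Q₂). -/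
open MeasureTheory

variable {A N k : ℕ}

/-- The Kantorovich distance between two Borel measures:
`dl_K(μ,ν) = sup {|∫ g dμ − ∫ g dν| : |g(x) − g(y)| ≤ ‖x − y‖ for all x, y}`. -/
noncomputable def Kdist {E : Type*} [MeasurableSpace E] [NormedAddCommGroup E]
    (μ ν : Measure E) : ℝ :=
  sSup {x : ℝ | ∃ g : E → ℝ, (∀ a b : E, |g a - g b| ≤ ‖a - b‖) ∧
    x = |(∫ y, g y ∂μ) - ∫ y, g y ∂ν|}

/- For fixed `f` and `t`, the map `ξ ↦ û(f,ξ,t)` is `L ‖Δᵀ‖ (θ1 + θ2)`-Lipschitz on `Ξ`, because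
the smoothed penalty `h(·,t)` is `1`-Lipschitz. For any Lipschitz `F` on a set carrying both
measures, a norming functional `φ` of `∫ F dQ₁ - ∫ F dQ₂` reduces the claim to the real-valued
`φ ∘ F`; extending it to a Lipschitz function on the whole space (McShane) puts it, after rescaling,
among the test functions of `dl_K`. -/

open scoped NNReal

theorem lipschitzWith_one_iff_abs_sub_le {X : Type*} [SeminormedAddCommGroup X] {g : X → ℝ} :
    LipschitzWith 1 g ↔ ∀ a b, |g a - g b| ≤ ‖a - b‖ := by
  simp [lipschitzWith_iff_dist_le_mul, dist_eq_norm]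

section Kantorovich

variable {X : Type*} [NormedAddCommGroup X] [MeasurableSpace X] [OpensMeasurableSpace X]
  {μ ν : Measure X}

theorem LipschitzWith.integrable_of_integrable_norm [IsFiniteMeasure μ] {K : ℝ≥0} {g : X → ℝ}
    (hg : LipschitzWith K g) (hμ : Integrable (fun x => ‖x‖) μ) : Integrable g μ := by
  refine Integrable.mono' ((hμ.const_mul K).add (integrable_const ‖g 0‖))
    hg.continuous.aestronglyMeasurable (ae_of_all _ fun x => ?_)
  have hx : ‖g x - g 0‖ ≤ K * ‖x‖ := by simpa using hg.norm_sub_le x 0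
  simp only [Pi.add_apply]
  linarith [norm_le_norm_add_norm_sub' (g x) (g 0)]

theorem abs_integral_sub_apply_zero_le [IsProbabilityMeasure μ] {g : X → ℝ}
    (hg : LipschitzWith 1 g) (hμ : Integrable (fun x => ‖x‖) μ) :
    |∫ x, g x ∂μ - g 0| ≤ ∫ x, ‖x‖ ∂μ := by
  have hsub : ∫ x, g x ∂μ - g 0 = ∫ x, (g x - g 0) ∂μ := by
    rw [integral_sub (hg.integrable_of_integrable_norm hμ) (integrable_const _), integral_const,
      probReal_univ, one_smul]
  rw [hsub, ← Real.norm_eq_abs]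
  refine norm_integral_le_of_norm_le hμ (ae_of_all _ fun x => ?_)
  simpa using hg.norm_sub_le x 0

variable [IsProbabilityMeasure μ] [IsProbabilityMeasure ν]
  (hμ : Integrable (fun x => ‖x‖) μ) (hν : Integrable (fun x => ‖x‖) ν)
include hμ hν

theorem abs_integral_sub_integral_le_Kdist {g : X → ℝ} (hg : LipschitzWith 1 g) :
    |∫ x, g x ∂μ - ∫ x, g x ∂ν| ≤ Kdist μ ν := by
  refine le_csSup ⟨(∫ x, ‖x‖ ∂μ) + ∫ x, ‖x‖ ∂ν, ?_⟩
    ⟨g, lipschitzWith_one_iff_abs_sub_le.mp hg, rfl⟩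
  rintro _ ⟨g, hg, rfl⟩
  replace hg := lipschitzWith_one_iff_abs_sub_le.mpr hg
  calc |∫ x, g x ∂μ - ∫ x, g x ∂ν|
      = |(∫ x, g x ∂μ - g 0) - (∫ x, g x ∂ν - g 0)| := by ring_nf
    _ ≤ |∫ x, g x ∂μ - g 0| + |∫ x, g x ∂ν - g 0| := abs_sub _ _
    _ ≤ (∫ x, ‖x‖ ∂μ) + ∫ x, ‖x‖ ∂ν :=
      add_le_add (abs_integral_sub_apply_zero_le hg hμ) (abs_integral_sub_apply_zero_le hg hν)

theorem abs_integral_sub_integral_le_mul_Kdist {K : ℝ≥0} {g : X → ℝ} (hg : LipschitzWith K g) :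
    |∫ x, g x ∂μ - ∫ x, g x ∂ν| ≤ K * Kdist μ ν := by
  rcases eq_or_ne K 0 with rfl | hK
  · obtain ⟨x₀⟩ : Nonempty X := nonempty_of_isProbabilityMeasure μ
    have hconst : g = fun _ => g x₀ := funext fun x => by
      simpa [dist_le_zero] using hg.dist_le_mul x x₀
    rw [hconst]
    simp
  have hKg : LipschitzWith 1 fun x => (K : ℝ)⁻¹ * g x := by
    have := (lipschitzWith_smul (K : ℝ)⁻¹).comp hg
    rwa [nnnorm_inv, NNReal.nnnorm_eq, inv_mul_cancel₀ hK] at this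
  have := abs_integral_sub_integral_le_Kdist hμ hν hKg
  rwa [integral_const_mul, integral_const_mul, ← mul_sub, abs_mul,
    abs_of_nonneg (by positivity), inv_mul_le_iff₀ (by positivity)] at this

theorem norm_integral_sub_integral_le_mul_Kdist {E : Type*} [NormedAddCommGroup E]
    [NormedSpace ℝ E] [CompleteSpace E] {s : Set X} (hμs : μ sᶜ = 0) (hνs : ν sᶜ = 0)
    {K : ℝ≥0} {F : X → E} (hF : LipschitzOnWith K F s) (hFμ : Integrable F μ)
    (hFν : Integrable F ν) :
    ‖∫ x, F x ∂μ - ∫ x, F x ∂ν‖ ≤ K * Kdist μ ν := by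
  obtain ⟨φ, hφ, hφD⟩ := exists_dual_vector'' ℝ (∫ x, F x ∂μ - ∫ x, F x ∂ν)
  have hφF : LipschitzOnWith K (φ ∘ F) s := by
    simpa using (φ.lipschitz.weaken (by exact_mod_cast hφ : ‖φ‖₊ ≤ 1)).comp_lipschitzOnWith hF
  obtain ⟨g, hg, hgF⟩ := hφF.extend_real
  have integral_g_eq : ∀ {ρ : Measure X}, ρ sᶜ = 0 → Integrable F ρ →
      ∫ x, g x ∂ρ = φ (∫ x, F x ∂ρ) :=
    fun hρs hFρ => by
      rw [← φ.integral_comp_comm hFρ]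
      exact integral_congr_ae ((ae_iff.mpr hρs).mono fun x hx => (hgF hx).symm)
  rw [RCLike.ofReal_real_eq_id, id] at hφD
  rw [← hφD, map_sub, ← integral_g_eq hμs hFμ, ← integral_g_eq hνs hFν]
  exact (le_abs_self _).trans (abs_integral_sub_integral_le_mul_Kdist hμ hν hg)

end Kantorovich

theorem hpen_sub_hpen_mem_Icc {t z z' : ℝ} (ht : 0 < t) (hz : z' ≤ z) :
    hpen t z - hpen t z' ∈ Set.Icc 0 (z - z') := by
  have hq : ∀ w, (w + t) ^ 2 / (4 * t) * (4 * t) = (w + t) ^ 2 := fun w =>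
    div_mul_cancel₀ _ (by positivity)
  unfold hpen
  split_ifs <;> constructor <;> nlinarith [hq z, hq z']

theorem hpen_lipschitzWith {t : ℝ} (ht : 0 < t) : LipschitzWith 1 (hpen t) := by
  refine LipschitzWith.of_le_add fun z z' => ?_
  rw [Real.dist_eq]
  rcases le_total z' z with h | h
  · linarith [(hpen_sub_hpen_mem_Icc ht h).2, le_abs_self (z - z')]
  · linarith [(hpen_sub_hpen_mem_Icc ht h).1, abs_nonneg (z - z')]

theorem EuclideanSpace.norm_le_mul_norm_of_forall {ι : Type*} [Fintype ι]
    {u v : EuclideanSpace ℝ ι} {c : ℝ} (hc : 0 ≤ c) (h : ∀ i, ‖u i‖ ≤ c * ‖v i‖) :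
    ‖u‖ ≤ c * ‖v‖ := by
  rw [EuclideanSpace.norm_eq, EuclideanSpace.norm_eq, ← Real.sqrt_sq hc,
    ← Real.sqrt_mul (sq_nonneg c), Finset.mul_sum]
  gcongr with i
  rw [← mul_pow]
  exact pow_le_pow_left₀ (norm_nonneg _) (h i) 2

section Disutility

variable (Δ : EuclideanSpace ℝ (Fin N) →L[ℝ] EuclideanSpace ℝ (Fin A))
  {θ0 θ1 θ2 : ℝ} (d τ : EuclideanSpace ℝ (Fin N))
  (T : EuclideanSpace ℝ (Fin A) → EuclideanSpace ℝ (Fin k) → EuclideanSpace ℝ (Fin A))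
  (f : EuclideanSpace ℝ (Fin N)) {t : ℝ}

theorem norm_uhat_sub_uhat_le (hθ1 : 0 ≤ θ1) (hθ2 : 0 ≤ θ2) (ht : 0 < t)
    (ξ ξ' : EuclideanSpace ℝ (Fin k)) :
    ‖uhat Δ θ0 θ1 θ2 d τ T f ξ t - uhat Δ θ0 θ1 θ2 d τ T f ξ' t‖ ≤
      (θ1 + θ2) * ‖pathTime Δ T f ξ - pathTime Δ T f ξ'‖ := by
  refine EuclideanSpace.norm_le_mul_norm_of_forall (by positivity) fun r => ?_
  set c := pathTime Δ T f ξ r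
  set c' := pathTime Δ T f ξ' r
  have hpen_le : ‖hpen t (c - τ r) - hpen t (c' - τ r)‖ ≤ ‖c - c'‖ := by
    simpa [← dist_eq_norm] using (hpen_lipschitzWith ht).dist_le_mul (c - τ r) (c' - τ r)
  have hcomp : (uhat Δ θ0 θ1 θ2 d τ T f ξ t - uhat Δ θ0 θ1 θ2 d τ T f ξ' t) r
      = θ1 * (c - c') + θ2 * (hpen t (c - τ r) - hpen t (c' - τ r)) := by
    simp only [uhat, PiLp.sub_apply]; ring
  rw [hcomp, PiLp.sub_apply]
  calc ‖θ1 * (c - c') + θ2 * (hpen t (c - τ r) - hpen t (c' - τ r))‖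
      ≤ θ1 * ‖c - c'‖ + θ2 * ‖hpen t (c - τ r) - hpen t (c' - τ r)‖ := by
        refine (norm_add_le _ _).trans_eq ?_
        rw [norm_mul, norm_mul, Real.norm_of_nonneg hθ1, Real.norm_of_nonneg hθ2]
    _ ≤ (θ1 + θ2) * ‖c - c'‖ := by nlinarith

theorem lipschitzOnWith_uhat (hθ1 : 0 ≤ θ1) (hθ2 : 0 ≤ θ2) (ht : 0 < t) {L : ℝ}
    {Ξ : Set (EuclideanSpace ℝ (Fin k))}
    (hT : ∀ ξ ∈ Ξ, ∀ ξ' ∈ Ξ, ‖T (Δ f) ξ - T (Δ f) ξ'‖ ≤ L * ‖ξ - ξ'‖) :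
    LipschitzOnWith (L * ‖ContinuousLinearMap.adjoint Δ‖ * (θ1 + θ2)).toNNReal
      (fun ξ => uhat Δ θ0 θ1 θ2 d τ T f ξ t) Ξ := by
  refine LipschitzOnWith.of_dist_le' fun ξ hξ ξ' hξ' => ?_
  rw [dist_eq_norm, dist_eq_norm]
  calc ‖uhat Δ θ0 θ1 θ2 d τ T f ξ t - uhat Δ θ0 θ1 θ2 d τ T f ξ' t‖
      ≤ (θ1 + θ2) * ‖ContinuousLinearMap.adjoint Δ (T (Δ f) ξ - T (Δ f) ξ')‖ := by
        simpa only [pathTime, map_sub] using norm_uhat_sub_uhat_le Δ d τ T f hθ1 hθ2 ht ξ ξ'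
    _ ≤ (θ1 + θ2) * (‖ContinuousLinearMap.adjoint Δ‖ * (L * ‖ξ - ξ'‖)) := by
        gcongr
        exact (ContinuousLinearMap.le_opNorm _ _).trans (by gcongr; exact hT ξ hξ ξ' hξ')
    _ = L * ‖ContinuousLinearMap.adjoint Δ‖ * (θ1 + θ2) * ‖ξ - ξ'‖ := by ring

end Disutility

theorem smoothed_expected_disutility_kantorovich_bound_general
    (A N k : ℕ) (Δ : EuclideanSpace ℝ (Fin N) →L[ℝ] EuclideanSpace ℝ (Fin A))
    (θ0 θ1 θ2 : ℝ) (hθ1 : 0 ≤ θ1) (hθ2 : 0 ≤ θ2)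
    (d τ : EuclideanSpace ℝ (Fin N)) (Ξ : Set (EuclideanSpace ℝ (Fin k)))
    (T : EuclideanSpace ℝ (Fin A) → EuclideanSpace ℝ (Fin k) → EuclideanSpace ℝ (Fin A))
    (𝔽 : Set (EuclideanSpace ℝ (Fin N)))
    (L : ℝ) (hL : 0 < L)
    (hT : ∀ v ∈ Δ '' 𝔽, ∀ ξ ∈ Ξ, ∀ ξ' ∈ Ξ, ‖T v ξ - T v ξ'‖ ≤ L * ‖ξ - ξ'‖)
    (Q₁ Q₂ : Measure (EuclideanSpace ℝ (Fin k)))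
    [IsProbabilityMeasure Q₁] [IsProbabilityMeasure Q₂]
    (hQ₁Ξ : Q₁ Ξᶜ = 0) (hQ₂Ξ : Q₂ Ξᶜ = 0)
    (hmom₁ : Integrable (fun ξ => ‖ξ‖) Q₁) (hmom₂ : Integrable (fun ξ => ‖ξ‖) Q₂)
    (hint : ∀ f ∈ 𝔽, ∀ t : ℝ, 0 < t →
      IntegrableOn (fun ξ => uhat Δ θ0 θ1 θ2 d τ T f ξ t) Ξ Q₁ ∧
      IntegrableOn (fun ξ => uhat Δ θ0 θ1 θ2 d τ T f ξ t) Ξ Q₂) :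
    ∀ t : ℝ, 0 < t → ∀ f ∈ 𝔽,
      ‖(∫ ξ in Ξ, uhat Δ θ0 θ1 θ2 d τ T f ξ t ∂Q₁) -
          ∫ ξ in Ξ, uhat Δ θ0 θ1 θ2 d τ T f ξ t ∂Q₂‖ ≤
        L * ‖ContinuousLinearMap.adjoint Δ‖ * (θ1 + θ2) * Kdist Q₁ Q₂ := by
  intro t ht f hf
  obtain ⟨hint₁, hint₂⟩ := hint f hf t ht
  have hQ₁ : Q₁.restrict Ξ = Q₁ := Measure.restrict_eq_self_of_ae_mem (ae_iff.mpr hQ₁Ξ)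
  have hQ₂ : Q₂.restrict Ξ = Q₂ := Measure.restrict_eq_self_of_ae_mem (ae_iff.mpr hQ₂Ξ)
  rw [IntegrableOn, hQ₁] at hint₁
  rw [IntegrableOn, hQ₂] at hint₂
  rw [hQ₁, hQ₂]
  have hlip := lipschitzOnWith_uhat Δ (θ0 := θ0) d τ T f hθ1 hθ2 ht (hT (Δ f) ⟨f, hf, rfl⟩)
  have hK : 0 ≤ L * ‖ContinuousLinearMap.adjoint Δ‖ * (θ1 + θ2) := by positivity
  simpa only [Real.coe_toNNReal _ hK] using
    norm_integral_sub_integral_le_mul_Kdist hmom₁ hmom₂ hQ₁Ξ hQ₂Ξ hlip hint₁ hint₂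

/-- if `T(v,·)` is `L`-Lipschitz on `Ξ` uniformly for `v ∈ V = Δ(𝔽)`, then
for probability measures `Q₁, Q₂` on `Ξ` with finite first moments, for every `t > 0`,
`sup_{f∈𝔽} ‖∫_Ξ û(f,ξ,t) dQ₁ − ∫_Ξ û(f,ξ,t) dQ₂‖ ≤ L ‖Δᵀ‖ (θ1 + θ2) · dl_K(Q₁, Q₂)`. -/
theorem smoothed_expected_disutility_kantorovich_bound
    (A N k : ℕ) (Δ : EuclideanSpace ℝ (Fin N) →L[ℝ] EuclideanSpace ℝ (Fin A))
    (θ0 θ1 θ2 : ℝ) (hθ0 : 0 ≤ θ0) (hθ1 : 0 ≤ θ1) (hθ2 : 0 ≤ θ2)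
    (d τ : EuclideanSpace ℝ (Fin N)) (Ξ : Set (EuclideanSpace ℝ (Fin k)))
    (T : EuclideanSpace ℝ (Fin A) → EuclideanSpace ℝ (Fin k) → EuclideanSpace ℝ (Fin A))
    (𝔽 : Set (EuclideanSpace ℝ (Fin N))) (h𝔽 : IsCompact 𝔽)
    (L : ℝ) (hL : 0 < L)
    (hT : ∀ v ∈ Δ '' 𝔽, ∀ ξ ∈ Ξ, ∀ ξ' ∈ Ξ, ‖T v ξ - T v ξ'‖ ≤ L * ‖ξ - ξ'‖)
    (Q₁ Q₂ : Measure (EuclideanSpace ℝ (Fin k)))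
    [IsProbabilityMeasure Q₁] [IsProbabilityMeasure Q₂]
    (hQ₁Ξ : Q₁ Ξᶜ = 0) (hQ₂Ξ : Q₂ Ξᶜ = 0)
    (hmom₁ : Integrable (fun ξ => ‖ξ‖) Q₁) (hmom₂ : Integrable (fun ξ => ‖ξ‖) Q₂)
    (hint : ∀ f ∈ 𝔽, ∀ t : ℝ, 0 < t →
      IntegrableOn (fun ξ => uhat Δ θ0 θ1 θ2 d τ T f ξ t) Ξ Q₁ ∧
      IntegrableOn (fun ξ => uhat Δ θ0 θ1 θ2 d τ T f ξ t) Ξ Q₂) :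
    ∀ t : ℝ, 0 < t → ∀ f ∈ 𝔽,
      ‖(∫ ξ in Ξ, uhat Δ θ0 θ1 θ2 d τ T f ξ t ∂Q₁) -
          ∫ ξ in Ξ, uhat Δ θ0 θ1 θ2 d τ T f ξ t ∂Q₂‖ ≤
        L * ‖ContinuousLinearMap.adjoint Δ‖ * (θ1 + θ2) * Kdist Q₁ Q₂ :=
  smoothed_expected_disutility_kantorovich_bound_general A N k Δ θ0 θ1 θ2 hθ1 hθ2 d τ Ξ T 𝔽 L hL hT
    Q₁ Q₂ hQ₁Ξ hQ₂Ξ hmom₁ hmom₂ hint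
end

section
/- Let Ξ ⊆ ℝ^k be a compact set, c ≥ 0, and suppose 𝐟 : 𝒫(Ξ) → ℝ^N satisfies ‖𝐟(Q₁) − 𝐟(Q₂)‖ ≤ c · dl_K(Q₁, Q₂) for all Q₁, Q₂ ∈ 𝒫(Ξ). For M ∈ ℕ define the estimator f̂_M : Ξ^M → ℝ^N by f̂_M(ξ¹,…,ξ^M) = 𝐟( (1/M) Σ_{i=1}^M δ_{ξ^i} ). Then f̂_M satisfies ‖f̂_M(x¹,…,x^M) − f̂_M(y¹,…,y^M)‖ ≤ (c/M) Σ_{i=1}^M ‖x^i − y^i‖, and for every M and all P, Q ∈ 𝒫(Ξ), dl_K( P^{⊗M} ∘ f̂_M⁻¹ , Q^{⊗M} ∘ f̂_M⁻¹ ) ≤ c · dl_K(P, Q); i.e., the estimator is quantitatively statistically robust. -/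
/-!
For a 1-Lipschitz test function `g`, the integrals of `g` against the empirical measures of two
samples differ by at most the average of `‖xⁱ - yⁱ‖`; with the Kantorovich-Lipschitz property of
`Fsol` this gives the first claim.

For the laws, fix a 1-Lipschitz `g` on `ℝ^N`; then `g ∘ f̂_M` moves by at most `(c/M) ‖a - b‖`
when one coordinate moves from `a` to `b` inside `Ξ`. Replace `P` by `Q` one coordinate at a
time: integrating out the other coordinates (Fubini) leaves a `(c/M)`-Lipschitz function on `Ξ`,
which extends to a Lipschitz function on `ℝ^k` (McShane), so each replacement costs at most
`(c/M) dl_K(P, Q)`, and the `M` replacements cost `c dl_K(P, Q)`. Compactness of `Ξ` makes every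
integral finite and the supremum defining `dl_K` bounded (otherwise `sSup` would be `0`).
-/

open MeasureTheory

open Set
open scoped NNReal ENNReal

theorem abs_integral_le_of_ae_abs_le {X : Type*} [MeasurableSpace X] {μ : Measure X}
    [IsProbabilityMeasure μ] {f : X → ℝ} {C : ℝ} (hf : ∀ᵐ x ∂μ, |f x| ≤ C) :
    |∫ x, f x ∂μ| ≤ C := by
  simpa using norm_integral_le_of_norm_le_const (μ := μ) (f := f) (by simpa using hf)

theorem ContinuousOn.integrable_of_ae_mem {X F : Type*} [TopologicalSpace X] [T2Space X]
    [MeasurableSpace X] [OpensMeasurableSpace X] [NormedAddCommGroup F] {f : X → F}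
    {K : Set X} (hf : ContinuousOn f K) (hK : IsCompact K) {μ : Measure X} [IsFiniteMeasure μ]
    (hμ : ∀ᵐ x ∂μ, x ∈ K) : Integrable f μ := by
  simpa [IntegrableOn, Measure.restrict_eq_self_of_ae_mem hμ] using
    hf.integrableOn_compact (μ := μ) hK

theorem lipschitzOnWith_integral {X Y : Type*} [PseudoMetricSpace X] [MeasurableSpace Y]
    {ν : Measure Y} [IsProbabilityMeasure ν] {f : X → Y → ℝ} {t : Set X} {K : ℝ≥0}
    (hint : ∀ a ∈ t, Integrable (f a) ν)
    (hf : ∀ a ∈ t, ∀ b ∈ t, ∀ᵐ y ∂ν, |f a y - f b y| ≤ K * dist a b) :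
    LipschitzOnWith K (fun a => ∫ y, f a y ∂ν) t := by
  refine LipschitzOnWith.of_dist_le_mul fun a ha b hb => ?_
  rw [Real.dist_eq, ← integral_sub (hint a ha) (hint b hb)]
  exact abs_integral_le_of_ae_abs_le (hf a ha b hb)

theorem integral_pi_fin_succ {X : Type*} [MeasurableSpace X] {n : ℕ} (μ : Measure X)
    [SigmaFinite μ] {h : (Fin (n + 1) → X) → ℝ} (hh : Integrable h (Measure.pi fun _ => μ)) :
    ∫ x, h x ∂Measure.pi (fun _ => μ) =
      ∫ ξ, ∫ y, h (Fin.cons ξ y) ∂Measure.pi (fun _ : Fin n => μ) ∂μ := by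
  set e := MeasurableEquiv.piFinSuccAbove (fun _ : Fin (n + 1) => X) 0
  have he := (measurePreserving_piFinSuccAbove (fun _ : Fin (n + 1) => μ) 0).symm e
  rw [← he.integral_comp', integral_prod (fun z => h (e.symm z))
    ((he.integrable_comp_emb e.symm.measurableEmbedding).2 hh)]
  simp [e, MeasurableEquiv.piFinSuccAbove_symm_apply, Fin.consEquiv]

theorem ae_mem_univ_pi {ι X : Type*} [Fintype ι] [MeasurableSpace X] {μ : ι → Measure X}
    [∀ i, SigmaFinite (μ i)] {s : Set X} (h : ∀ i, ∀ᵐ x ∂μ i, x ∈ s) :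
    ∀ᵐ x ∂Measure.pi μ, x ∈ univ.pi fun _ => s :=
  Filter.Eventually.mono (Measure.ae_pi_le_pi (Filter.eventually_pi h)) fun _ hx i _ => hx i

section Kantorovich

variable {E : Type*} [NormedAddCommGroup E]

theorem lipschitzWith_iff_abs_sub_le {g : E → ℝ} {L : ℝ≥0} :
    LipschitzWith L g ↔ ∀ a b, |g a - g b| ≤ L * ‖a - b‖ := by
  simp only [lipschitzWith_iff_dist_le_mul, dist_eq_norm, Real.norm_eq_abs]

theorem continuous_of_abs_sub_le {g : E → ℝ} (hg : ∀ a b, |g a - g b| ≤ ‖a - b‖) :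
    Continuous g :=
  (lipschitzWith_iff_abs_sub_le (L := 1).2 fun a b => by simpa using hg a b).continuous

variable [MeasurableSpace E]

theorem Kdist_nonneg (μ ν : Measure E) : 0 ≤ Kdist μ ν :=
  Real.sSup_nonneg (by rintro _ ⟨g, -, rfl⟩; exact abs_nonneg _)

theorem Kdist_le_of_forall {μ ν : Measure E} {B : ℝ} (hB : 0 ≤ B)
    (h : ∀ g : E → ℝ, (∀ a b, |g a - g b| ≤ ‖a - b‖) → |∫ y, g y ∂μ - ∫ y, g y ∂ν| ≤ B) :
    Kdist μ ν ≤ B :=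
  Real.sSup_le (by rintro _ ⟨g, hg, rfl⟩; exact h g hg) hB

variable [OpensMeasurableSpace E] {s : Set E} {P Q : Measure E}
  [IsProbabilityMeasure P] [IsProbabilityMeasure Q]

theorem abs_integral_sub_le_Kdist (hs : IsCompact s) (hP : ∀ᵐ x ∂P, x ∈ s)
    (hQ : ∀ᵐ x ∂Q, x ∈ s) {g : E → ℝ} (hg : ∀ a b, |g a - g b| ≤ ‖a - b‖) :
    |∫ y, g y ∂P - ∫ y, g y ∂Q| ≤ Kdist P Q := by
  refine le_csSup ?_ ⟨g, hg, rfl⟩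
  obtain ⟨R, hR⟩ := hs.isBounded.exists_norm_le
  have near_origin : ∀ μ : Measure E, [IsProbabilityMeasure μ] → (∀ᵐ x ∂μ, x ∈ s) →
      ∀ u : E → ℝ, (∀ a b, |u a - u b| ≤ ‖a - b‖) → |∫ y, u y ∂μ - u 0| ≤ R := by
    intro μ _ hμ u hu
    have hint := (continuous_of_abs_sub_le hu).continuousOn.integrable_of_ae_mem hs hμ
    have hsub : ∫ y, u y ∂μ - u 0 = ∫ y, (u y - u 0) ∂μ := by
      rw [integral_sub hint (integrable_const _)]; simp
    rw [hsub]
    exact abs_integral_le_of_ae_abs_le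
      (hμ.mono fun y hy => (hu y 0).trans (by simpa using hR y hy))
  refine ⟨R + R, ?_⟩
  rintro _ ⟨u, hu, rfl⟩
  calc |∫ y, u y ∂P - ∫ y, u y ∂Q| ≤ |∫ y, u y ∂P - u 0| + |u 0 - ∫ y, u y ∂Q| :=
        abs_sub_le _ _ _
    _ ≤ R + R := by
      rw [abs_sub_comm (u 0)]
      exact add_le_add (near_origin P hP u hu) (near_origin Q hQ u hu)

theorem LipschitzOnWith.abs_integral_sub_le_mul_Kdist (hs : IsCompact s) {u : E → ℝ} {L : ℝ≥0}
    (hu : LipschitzOnWith L u s) (hP : ∀ᵐ x ∂P, x ∈ s) (hQ : ∀ᵐ x ∂Q, x ∈ s) :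
    |∫ y, u y ∂P - ∫ y, u y ∂Q| ≤ L * Kdist P Q := by
  obtain ⟨v, hv, huv⟩ := hu.extend_real
  rw [integral_congr_ae (hP.mono fun x hx => huv hx),
    integral_congr_ae (hQ.mono fun x hx => huv hx)]
  rcases eq_or_ne L 0 with rfl | hL
  · have hconst : v = fun _ => v 0 := funext fun x => by simpa using hv.dist_le_mul x 0
    rw [hconst]
    simp
  · have hL' : (0 : ℝ) < L := by positivity
    have hw : ∀ a b, |v a / L - v b / L| ≤ ‖a - b‖ := fun a b => by
      rw [← sub_div, abs_div, abs_of_pos hL', div_le_iff₀' hL']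
      exact lipschitzWith_iff_abs_sub_le.1 hv a b
    have := abs_integral_sub_le_Kdist hs hP hQ hw
    rwa [integral_div, integral_div, ← sub_div, abs_div, abs_of_pos hL', div_le_iff₀' hL'] at this

end Kantorovich

section Product

variable {E : Type*} [NormedAddCommGroup E]

theorem lipschitzOnWith_of_norm_sub_le_sum {ι E' : Type*} [Fintype ι] [SeminormedAddCommGroup E']
    {F : (ι → E) → E'} {s : Set E} {L : ℝ≥0}
    (hF : ∀ x y, (∀ i, x i ∈ s) → (∀ i, y i ∈ s) → ‖F x - F y‖ ≤ L * ∑ i, ‖x i - y i‖) :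
    LipschitzOnWith (L * Fintype.card ι) F (univ.pi fun _ => s) := by
  refine LipschitzOnWith.of_dist_le_mul fun x hx y hy => ?_
  rw [mem_univ_pi] at hx hy
  have hsum : ∑ i, ‖x i - y i‖ ≤ Fintype.card ι * dist x y := by
    simpa [← dist_eq_norm] using Finset.sum_le_card_nsmul Finset.univ _ _
      fun i _ => dist_le_pi_dist x y i
  calc dist (F x) (F y) ≤ L * ∑ i, ‖x i - y i‖ := by rw [dist_eq_norm]; exact hF x y hx hy
    _ ≤ L * (Fintype.card ι * dist x y) := by gcongr
    _ = ↑(L * Fintype.card ι) * dist x y := by push_cast; ring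

theorem norm_sub_cons_le {E' : Type*} [SeminormedAddCommGroup E'] {s : Set E} {L : ℝ≥0} {n : ℕ}
    {h : (Fin (n + 1) → E) → E'}
    (hh : ∀ x y, (∀ i, x i ∈ s) → (∀ i, y i ∈ s) → ‖h x - h y‖ ≤ L * ∑ i, ‖x i - y i‖)
    {a b : E} (ha : a ∈ s) (hb : b ∈ s) {y y' : Fin n → E} (hy : ∀ j, y j ∈ s)
    (hy' : ∀ j, y' j ∈ s) :
    ‖h (Fin.cons a y) - h (Fin.cons b y')‖ ≤ L * (‖a - b‖ + ∑ j, ‖y j - y' j‖) := by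
  simpa [Fin.sum_univ_succ] using hh (Fin.cons a y) (Fin.cons b y')
    (Fin.forall_fin_succ.2 ⟨ha, hy⟩) (Fin.forall_fin_succ.2 ⟨hb, hy'⟩)

variable [MeasurableSpace E] [OpensMeasurableSpace E] [SecondCountableTopology E] {s : Set E}
  {P Q : Measure E} [IsProbabilityMeasure P] [IsProbabilityMeasure Q]

theorem integrable_pi_of_norm_sub_le_sum {ι : Type*} [Fintype ι] (hs : IsCompact s)
    {f : (ι → E) → ℝ} {L : ℝ≥0}
    (hf : ∀ x y, (∀ i, x i ∈ s) → (∀ i, y i ∈ s) → ‖f x - f y‖ ≤ L * ∑ i, ‖x i - y i‖)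
    {μ : Measure E} [IsProbabilityMeasure μ] (hμ : ∀ᵐ x ∂μ, x ∈ s) :
    Integrable f (Measure.pi fun _ => μ) :=
  (lipschitzOnWith_of_norm_sub_le_sum hf).continuousOn.integrable_of_ae_mem
    (isCompact_univ_pi fun _ => hs) (ae_mem_univ_pi fun _ => hμ)

theorem abs_integral_pi_sub_le (hs : IsCompact s) (hP : ∀ᵐ x ∂P, x ∈ s) (hQ : ∀ᵐ x ∂Q, x ∈ s)
    {L : ℝ≥0} {n : ℕ} {h : (Fin n → E) → ℝ}
    (hh : ∀ x y, (∀ i, x i ∈ s) → (∀ i, y i ∈ s) → ‖h x - h y‖ ≤ L * ∑ i, ‖x i - y i‖) :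
    |∫ x, h x ∂Measure.pi (fun _ => P) - ∫ x, h x ∂Measure.pi (fun _ => Q)| ≤
      n * L * Kdist P Q := by
  induction n with
  | zero => simp [Measure.pi_of_empty (x := finZeroElim)]
  | succ n ih =>
    have hslice : ∀ ξ ∈ s, ∀ y y' : Fin n → E, (∀ j, y j ∈ s) → (∀ j, y' j ∈ s) →
        ‖h (Fin.cons ξ y) - h (Fin.cons ξ y')‖ ≤ L * ∑ j, ‖y j - y' j‖ :=
      fun ξ hξ y y' hy hy' => by simpa using norm_sub_cons_le hh hξ hξ hy hy'
    have hfiber : ∀ a ∈ s, ∀ b ∈ s, ∀ y : Fin n → E, (∀ j, y j ∈ s) →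
        |h (Fin.cons a y) - h (Fin.cons b y)| ≤ L * dist a b :=
      fun a ha b hb y hy => by simpa [dist_eq_norm] using norm_sub_cons_le hh ha hb hy hy
    set G : Measure E → E → ℝ :=
      fun μ ξ => ∫ y, h (Fin.cons ξ y) ∂Measure.pi (fun _ : Fin n => μ)
    have hG : ∀ μ : Measure E, [IsProbabilityMeasure μ] → (∀ᵐ x ∂μ, x ∈ s) →
        LipschitzOnWith L (G μ) s := fun μ _ hμ =>
      lipschitzOnWith_integral (fun ξ hξ => integrable_pi_of_norm_sub_le_sum hs (hslice ξ hξ) hμ)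
        fun a ha b hb => (ae_mem_univ_pi fun _ => hμ).mono fun y hy =>
          hfiber a ha b hb y fun j => hy j (mem_univ j)
    have hGint : ∀ μ : Measure E, [IsProbabilityMeasure μ] → (∀ᵐ x ∂μ, x ∈ s) →
        Integrable (G μ) Q := fun μ _ hμ =>
      (hG μ hμ).continuousOn.integrable_of_ae_mem hs hQ
    calc |∫ x, h x ∂Measure.pi (fun _ => P) - ∫ x, h x ∂Measure.pi (fun _ => Q)|
        = |∫ ξ, G P ξ ∂P - ∫ ξ, G Q ξ ∂Q| := by
          rw [integral_pi_fin_succ P (integrable_pi_of_norm_sub_le_sum hs hh hP),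
            integral_pi_fin_succ Q (integrable_pi_of_norm_sub_le_sum hs hh hQ)]
      _ ≤ |∫ ξ, G P ξ ∂P - ∫ ξ, G P ξ ∂Q| + |∫ ξ, G P ξ ∂Q - ∫ ξ, G Q ξ ∂Q| :=
          abs_sub_le _ _ _
      _ ≤ L * Kdist P Q + n * L * Kdist P Q := by
          gcongr ?_ + ?_
          · exact (hG P hP).abs_integral_sub_le_mul_Kdist hs hP hQ
          · rw [← integral_sub (hGint P hP) (hGint Q hQ)]
            exact abs_integral_le_of_ae_abs_le (hQ.mono fun ξ hξ => ih (hslice ξ hξ))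
      _ = (n + 1 : ℕ) * L * Kdist P Q := by push_cast; ring

theorem Kdist_map_pi_le {E' : Type*} [NormedAddCommGroup E'] [MeasurableSpace E'] [BorelSpace E']
    (hs : IsCompact s) (hP : ∀ᵐ x ∂P, x ∈ s) (hQ : ∀ᵐ x ∂Q, x ∈ s) {L : ℝ≥0} {n : ℕ}
    {F : (Fin n → E) → E'}
    (hF : ∀ x y, (∀ i, x i ∈ s) → (∀ i, y i ∈ s) → ‖F x - F y‖ ≤ L * ∑ i, ‖x i - y i‖) :
    Kdist (Measure.map F (Measure.pi fun _ => P)) (Measure.map F (Measure.pi fun _ => Q)) ≤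
      n * L * Kdist P Q := by
  have hF_ae : ∀ μ : Measure E, [IsProbabilityMeasure μ] → (∀ᵐ x ∂μ, x ∈ s) →
      AEMeasurable F (Measure.pi fun _ => μ) := fun μ _ hμ => by
    simpa [Measure.restrict_eq_self_of_ae_mem (ae_mem_univ_pi fun _ => hμ)] using
      (lipschitzOnWith_of_norm_sub_le_sum hF).continuousOn.aemeasurable (μ := Measure.pi fun _ => μ)
        (isCompact_univ_pi fun _ => hs).measurableSet
  refine Kdist_le_of_forall (by positivity [Kdist_nonneg P Q]) fun g hg => ?_
  have hg_cont := continuous_of_abs_sub_le hg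
  rw [integral_map (hF_ae P hP) hg_cont.aestronglyMeasurable,
    integral_map (hF_ae Q hQ) hg_cont.aestronglyMeasurable]
  exact abs_integral_pi_sub_le hs hP hQ fun x y hx hy =>
    (hg (F x) (F y)).trans (hF x y hx hy)

end Product

section Empirical

variable {E : Type*} [MeasurableSpace E] {M : ℕ}

noncomputable def empiricalMeasure (x : Fin M → E) : Measure E :=
  (M : ℝ≥0∞)⁻¹ • ∑ i, Measure.dirac (x i)

theorem isProbabilityMeasure_empiricalMeasure (hM : 0 < M) (x : Fin M → E) :
    IsProbabilityMeasure (empiricalMeasure x) := by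
  constructor
  simp [empiricalMeasure, ENNReal.inv_mul_cancel (Nat.cast_ne_zero.2 hM.ne')]

theorem empiricalMeasure_compl_eq_zero {s : Set E} (hs : MeasurableSet s) {x : Fin M → E}
    (hx : ∀ i, x i ∈ s) : empiricalMeasure x sᶜ = 0 := by
  simp [empiricalMeasure, Measure.dirac_apply' _ hs.compl, hx]

theorem integral_empiricalMeasure [MeasurableSingletonClass E] (x : Fin M → E) (g : E → ℝ) :
    ∫ y, g y ∂empiricalMeasure x = (M : ℝ)⁻¹ * ∑ i, g (x i) := by
  rw [empiricalMeasure, integral_smul_measure,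
    integral_finsetSum_measure fun i _ => integrable_dirac (by simp)]
  simp [integral_dirac, ENNReal.toReal_inv]

theorem Kdist_empiricalMeasure_le [NormedAddCommGroup E] [MeasurableSingletonClass E]
    (x y : Fin M → E) :
    Kdist (empiricalMeasure x) (empiricalMeasure y) ≤ (M : ℝ)⁻¹ * ∑ i, ‖x i - y i‖ := by
  refine Kdist_le_of_forall (by positivity) fun g hg => ?_
  rw [integral_empiricalMeasure, integral_empiricalMeasure, ← mul_sub,
    ← Finset.sum_sub_distrib, abs_mul, abs_of_nonneg (by positivity)]
  gcongr
  exact (Finset.abs_sum_le_sum_abs _ _).trans (Finset.sum_le_sum fun i _ => hg _ _)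

end Empirical

/-- quantitative statistical robustness: if `Ξ` is compact and
`Fsol : 𝒫(Ξ) → ℝ^N` is `c`-Lipschitz with respect to the Kantorovich distance, then the
empirical estimator `f̂_M(ξ¹,…,ξ^M) = Fsol((1/M) Σ δ_{ξ^i})` is `(c/M) Σ ‖xⁱ − yⁱ‖`-
Lipschitz on `Ξ^M`, and the push-forward laws of the estimator satisfy
`dl_K(P^{⊗M} ∘ f̂_M⁻¹, Q^{⊗M} ∘ f̂_M⁻¹) ≤ c · dl_K(P, Q)` for all probability
measures `P, Q` on `Ξ`. -/
theorem estimator_statistical_robustness (k N : ℕ)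
    (Ξ : Set (EuclideanSpace ℝ (Fin k))) (hΞ : IsCompact Ξ)
    (c : ℝ) (hc : 0 ≤ c)
    (Fsol : Measure (EuclideanSpace ℝ (Fin k)) → EuclideanSpace ℝ (Fin N))
    (hFsol : ∀ Q₁ Q₂ : Measure (EuclideanSpace ℝ (Fin k)),
      IsProbabilityMeasure Q₁ → IsProbabilityMeasure Q₂ → Q₁ Ξᶜ = 0 → Q₂ Ξᶜ = 0 →
      ‖Fsol Q₁ - Fsol Q₂‖ ≤ c * Kdist Q₁ Q₂)
    (M : ℕ) (hM : 0 < M) :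
    (∀ x y : Fin M → EuclideanSpace ℝ (Fin k),
      (∀ i, x i ∈ Ξ) → (∀ i, y i ∈ Ξ) →
      ‖Fsol ((M : ENNReal)⁻¹ • ∑ i : Fin M, Measure.dirac (x i)) -
          Fsol ((M : ENNReal)⁻¹ • ∑ i : Fin M, Measure.dirac (y i))‖ ≤
        (c / M) * ∑ i : Fin M, ‖x i - y i‖) ∧
    (∀ P Q : Measure (EuclideanSpace ℝ (Fin k)),
      IsProbabilityMeasure P → IsProbabilityMeasure Q → P Ξᶜ = 0 → Q Ξᶜ = 0 →
      Kdist
        (Measure.map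
          (fun x : Fin M → EuclideanSpace ℝ (Fin k) =>
            Fsol ((M : ENNReal)⁻¹ • ∑ i : Fin M, Measure.dirac (x i)))
          (Measure.pi fun _ : Fin M => P))
        (Measure.map
          (fun x : Fin M → EuclideanSpace ℝ (Fin k) =>
            Fsol ((M : ENNReal)⁻¹ • ∑ i : Fin M, Measure.dirac (x i)))
          (Measure.pi fun _ : Fin M => Q)) ≤ c * Kdist P Q) := by
  have hΞ_meas : MeasurableSet Ξ := hΞ.isClosed.measurableSet
  have estimator_lipschitz : ∀ x y : Fin M → EuclideanSpace ℝ (Fin k),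
      (∀ i, x i ∈ Ξ) → (∀ i, y i ∈ Ξ) →
      ‖Fsol (empiricalMeasure x) - Fsol (empiricalMeasure y)‖ ≤ (c / M) * ∑ i, ‖x i - y i‖ :=
    fun x y hx hy => calc
      _ ≤ c * Kdist (empiricalMeasure x) (empiricalMeasure y) :=
        hFsol _ _ (isProbabilityMeasure_empiricalMeasure hM x)
          (isProbabilityMeasure_empiricalMeasure hM y)
          (empiricalMeasure_compl_eq_zero hΞ_meas hx) (empiricalMeasure_compl_eq_zero hΞ_meas hy)
      _ ≤ c * ((M : ℝ)⁻¹ * ∑ i, ‖x i - y i‖) := by gcongr; exact Kdist_empiricalMeasure_le x y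
      _ = (c / M) * ∑ i, ‖x i - y i‖ := by ring
  refine ⟨estimator_lipschitz, fun P Q _ _ hP hQ => ?_⟩
  calc _ ≤ M * (c.toNNReal / M : ℝ≥0) * Kdist P Q :=
        Kdist_map_pi_le hΞ (mem_ae_iff.2 hP) (mem_ae_iff.2 hQ) fun x y hx hy => by
          simpa [hc, empiricalMeasure] using estimator_lipschitz x y hx hy
    _ = c * Kdist P Q := by
        have : (M : ℝ) ≠ 0 := by positivity
        push_cast [Real.coe_toNNReal _ hc]
        field_simp
end
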